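/- arXiv:2605.30606 — 7 statements merged into one kernel-verified Lean document; each statement's English description precedes it below -/
import Mathlib

section
/- Let θ be an irrational number in (0,1), let s ≥ 2 be an integer, and let a = a₁a₂... be the word defined by a_i = α_j if {iθ} ∈ ((j-1)/s, j/s), for letters α₁,...,α_s. Then a has sub-linear complexity: for every n ≥ 1, the number of distinct factors of length n of a is at most sn + 1. -/
lemma fract_fract_add (a b : ℝ) : Int.fract (Int.fract a + b) = Int.fract (a + b) := by
  have h : Int.fract a + b = (a + b) - (⌊a⌋ : ℝ) := by
    have := Int.floor_add_fract a
    linarith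
  rw [h, Int.fract_sub_intCast]

lemma key_floor_lemma (θ : ℝ) (s n : ℕ) (hs : 0 < s) (x y : ℝ)
    (hx : x ∈ Set.Ico (0:ℝ) 1) (hy : y ∈ Set.Ico (0:ℝ) 1) (hxy : x ≤ y)
    (hnop : ∀ p : ℝ, (∃ q : Fin s × Fin n,
        Int.fract (((q.1 : ℕ) : ℝ)/(s:ℝ) - ((q.2 : ℕ) : ℝ)*θ) = p) → x < p → ¬ p ≤ y)
    (k : Fin n) :
    ⌊(s:ℝ) * Int.fract (x + (k:ℝ)*θ)⌋ = ⌊(s:ℝ) * Int.fract (y + (k:ℝ)*θ)⌋ := by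
  have hs0 : (0:ℝ) < (s:ℝ) := by exact_mod_cast hs
  set N : ℤ := ⌊x + (k:ℝ)*θ⌋ with hN
  set M : ℤ := ⌊y + (k:ℝ)*θ⌋ with hM
  have hNM : N ≤ M := Int.floor_le_floor (by linarith)
  have hfx : Int.fract (x + (k:ℝ)*θ) = x + (k:ℝ)*θ - (N:ℝ) := by
    have := Int.floor_add_fract (x + (k:ℝ)*θ); linarith
  have hfy : Int.fract (y + (k:ℝ)*θ) = y + (k:ℝ)*θ - (M:ℝ) := by
    have := Int.floor_add_fract (y + (k:ℝ)*θ); linarith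
  rcases lt_or_eq_of_le hNM with hlt | heq
  · -- wrap case: the point fract(-kθ) lies in (x,y], contradiction
    exfalso
    set p : ℝ := ((N:ℝ) + 1) - (k:ℝ)*θ with hp
    have hxp : x < p := by
      have := Int.lt_floor_add_one (x + (k:ℝ)*θ)
      rw [← hN] at this
      linarith
    have hpy : p ≤ y := by
      have h1 : ((N:ℝ) + 1) ≤ (M:ℝ) := by exact_mod_cast hlt
      have h2 : (M:ℝ) ≤ y + (k:ℝ)*θ := Int.floor_le _
      linarith
    refine hnop p ⟨⟨⟨0, hs⟩, k⟩, ?_⟩ hxp hpy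
    have h0 : (((⟨0, hs⟩ : Fin s) : ℕ) : ℝ)/(s:ℝ) - ((k : ℕ):ℝ)*θ = -((k:ℝ)*θ) := by
      push_cast; ring
    have hpval : p = ((N + 1 : ℤ) : ℝ) + (-((k:ℝ)*θ)) := by rw [hp]; push_cast; ring
    rw [h0, show Int.fract (-((k:ℝ)*θ)) = Int.fract p by rw [hpval, Int.fract_intCast_add]]
    exact Int.fract_eq_self.mpr ⟨by linarith [hx.1], by linarith [hy.2]⟩
  · -- no wrap: if floors of s * fract differ, an interior point m/s - kθ is in (x,y]
    by_contra hne
    set fx := Int.fract (x + (k:ℝ)*θ) with hfx'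
    set fy := Int.fract (y + (k:ℝ)*θ) with hfy'
    have hfle : fx ≤ fy := by rw [hfx, hfy, ← heq]; linarith
    have hfl : ⌊(s:ℝ) * fx⌋ < ⌊(s:ℝ) * fy⌋ :=
      lt_of_le_of_ne (Int.floor_le_floor (by nlinarith)) hne
    set m : ℤ := ⌊(s:ℝ) * fy⌋ with hm
    have hfy0 : (0:ℝ) ≤ fy := Int.fract_nonneg _
    have hfy1 : fy < 1 := Int.fract_lt_one _
    have hm0 : 0 ≤ m := Int.floor_nonneg.mpr (mul_nonneg hs0.le hfy0)
    have hms : m < (s:ℤ) := Int.floor_lt.mpr (by push_cast; nlinarith)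
    have hmle : (m:ℝ) ≤ (s:ℝ) * fy := Int.floor_le _
    have hmgt : (s:ℝ) * fx < (m:ℝ) := by
      have h1 : (s:ℝ) * fx < (⌊(s:ℝ) * fx⌋ : ℝ) + 1 := Int.lt_floor_add_one _
      have h2 : ((⌊(s:ℝ) * fx⌋ : ℤ) : ℝ) + 1 ≤ (m:ℝ) := by exact_mod_cast hfl
      linarith
    set p : ℝ := (m:ℝ)/(s:ℝ) - (k:ℝ)*θ + (N:ℝ) with hp
    have hfxlt : fx < (m:ℝ)/(s:ℝ) := by rw [lt_div_iff₀ hs0]; linarith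
    have hfyge : (m:ℝ)/(s:ℝ) ≤ fy := by rw [div_le_iff₀ hs0]; linarith
    have hxp : x < p := by rw [hp]; rw [hfx] at hfxlt; linarith
    have hpy : p ≤ y := by rw [hp]; rw [hfy, ← heq] at hfyge; linarith
    have hmnat : m.toNat < s := by omega
    refine hnop p ⟨⟨⟨m.toNat, hmnat⟩, k⟩, ?_⟩ hxp hpy
    have hcast : (((⟨m.toNat, hmnat⟩ : Fin s) : ℕ) : ℝ) = (m:ℝ) := by
      have h := Int.toNat_of_nonneg hm0
      exact_mod_cast congrArg (fun z : ℤ => (z : ℝ)) h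
    have hpval : p = (N:ℝ) + ((m:ℝ)/(s:ℝ) - (k:ℝ)*θ) := by rw [hp]; ring
    rw [hcast, show Int.fract ((m:ℝ)/(s:ℝ) - (k:ℝ)*θ) = Int.fract p by
      rw [hpval, Int.fract_intCast_add]]
    exact Int.fract_eq_self.mpr ⟨by linarith [hx.1], by linarith [hy.2]⟩

/-- Sub-linear complexity of codings of rotations by rational intervals: if `θ ∈ (0,1)` is
irrational, `s ≥ 2`, and the word `a₁a₂⋯` is defined by `a_i = letters j` whenever
`{i θ} ∈ ((j-1)/s, j/s)`, then for every `n ≥ 1` the number of distinct factors of length `n`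
of the word is at most `s * n + 1`. -/
theorem stmt_9 {A : Type*} (θ : ℝ) (hθ : Irrational θ) (hθ01 : θ ∈ Set.Ioo (0 : ℝ) 1)
    (s : ℕ) (hs : 2 ≤ s) (letters : ℕ → A) (a : ℕ → A)
    (ha : ∀ i : ℕ, 1 ≤ i → ∀ j : ℕ, 1 ≤ j → j ≤ s →
      Int.fract ((i : ℝ) * θ) ∈ Set.Ioo (((j : ℝ) - 1) / (s : ℝ)) ((j : ℝ) / (s : ℝ)) →
      a i = letters j)
    (n : ℕ) (hn : 1 ≤ n) :
    Set.Finite {w : Fin n → A | ∃ i : ℕ, 1 ≤ i ∧ ∀ k : Fin n, w k = a (i + k)} ∧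
      Set.ncard {w : Fin n → A | ∃ i : ℕ, 1 ≤ i ∧ ∀ k : Fin n, w k = a (i + k)}
        ≤ s * n + 1 := by
  have hs0 : 0 < s := by omega
  have hs0' : (0:ℝ) < (s:ℝ) := by exact_mod_cast hs0
  -- the coding function
  set F : ℝ → Fin n → A := fun x k => letters ((⌊(s:ℝ) * Int.fract (x + (k:ℝ)*θ)⌋).toNat + 1)
    with hF
  -- partition points
  set P : Finset ℝ := (Finset.univ : Finset (Fin s × Fin n)).image
      (fun q => Int.fract (((q.1 : ℕ) : ℝ)/(s:ℝ) - ((q.2 : ℕ) : ℝ)*θ)) with hP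
  set c : ℝ → ℕ := fun x => (P.filter (· ≤ x)).card with hc
  have hPcard : P.card ≤ s * n := by
    calc P.card ≤ (Finset.univ : Finset (Fin s × Fin n)).card := Finset.card_image_le
      _ = s * n := by simp
  have hcbound : ∀ x : ℝ, c x ≤ s * n :=
    fun x => le_trans (Finset.card_filter_le _ _) hPcard
  -- Step 1: factors are values of F at fract(iθ)
  have haF : ∀ i : ℕ, 1 ≤ i → ∀ k : Fin n, a (i + k) = F (Int.fract ((i:ℝ) * θ)) k := by
    intro i hi k
    have hik : 1 ≤ i + (k:ℕ) := le_trans hi (Nat.le_add_right _ _)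
    have hfr : Int.fract (Int.fract ((i:ℝ)*θ) + (k:ℝ)*θ)
        = Int.fract (((i + (k:ℕ) : ℕ) : ℝ) * θ) := by
      rw [fract_fract_add]
      congr 1
      push_cast
      ring
    set f := Int.fract (((i + (k:ℕ) : ℕ) : ℝ) * θ) with hf
    have hirr1 : Irrational (((i + (k:ℕ) : ℕ) : ℝ) * θ) := hθ.natCast_mul (by omega)
    have hirrf : Irrational f := by
      rw [hf, Int.fract]
      exact hirr1.sub_intCast _
    have hf0 : (0:ℝ) ≤ f := Int.fract_nonneg _
    have hf1 : f < 1 := Int.fract_lt_one _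
    set z : ℤ := ⌊(s:ℝ) * f⌋ with hz
    have hz0 : 0 ≤ z := Int.floor_nonneg.mpr (mul_nonneg hs0'.le hf0)
    have hzs : z < (s:ℤ) := Int.floor_lt.mpr (by push_cast; nlinarith)
    have hirrsf : Irrational ((s:ℝ) * f) := hirrf.natCast_mul (by omega)
    have hzlt : (z:ℝ) < (s:ℝ) * f := by
      rcases lt_or_eq_of_le (Int.floor_le ((s:ℝ) * f)) with h | h
      · exact h
      · exact absurd h.symm (hirrsf.ne_int z)
    have hzgt : (s:ℝ) * f < (z:ℝ) + 1 := Int.lt_floor_add_one _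
    set j : ℕ := z.toNat + 1 with hj
    have hj1 : 1 ≤ j := by omega
    have hjs : j ≤ s := by omega
    have hjcast : ((j:ℕ):ℝ) = (z:ℝ) + 1 := by
      rw [hj]
      push_cast
      norm_cast
      omega
    have hmem : f ∈ Set.Ioo (((j : ℝ) - 1) / (s : ℝ)) ((j : ℝ) / (s : ℝ)) := by
      constructor
      · rw [div_lt_iff₀ hs0', hjcast]
        nlinarith
      · rw [lt_div_iff₀ hs0', hjcast]
        nlinarith
    have := ha (i + (k:ℕ)) hik j hj1 hjs hmem
    rw [this, hF]
    simp only
    rw [hfr, hj, hz]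
  -- Step 2: F x depends only on c x
  have hkey : ∀ x y : ℝ, x ∈ Set.Ico (0:ℝ) 1 → y ∈ Set.Ico (0:ℝ) 1 → c x = c y →
      F x = F y := by
    have main : ∀ x y : ℝ, x ∈ Set.Ico (0:ℝ) 1 → y ∈ Set.Ico (0:ℝ) 1 → x ≤ y →
        c x = c y → F x = F y := by
      intro x y hx hy hxy hcxy
      have hsub : P.filter (· ≤ x) ⊆ P.filter (· ≤ y) := by
        intro p hp
        rw [Finset.mem_filter] at hp ⊢
        exact ⟨hp.1, le_trans hp.2 hxy⟩
      have heqf : P.filter (· ≤ x) = P.filter (· ≤ y) :=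
        Finset.eq_of_subset_of_card_le hsub (le_of_eq hcxy.symm)
      have hnop : ∀ p : ℝ, (∃ q : Fin s × Fin n,
          Int.fract (((q.1 : ℕ) : ℝ)/(s:ℝ) - ((q.2 : ℕ) : ℝ)*θ) = p) → x < p → ¬ p ≤ y := by
        intro p hpP hxp hpy
        have hmem : p ∈ P.filter (· ≤ y) := by
          rw [hP]
          refine Finset.mem_filter.mpr ⟨?_, hpy⟩
          obtain ⟨q, hq⟩ := hpP
          exact Finset.mem_image.mpr ⟨q, Finset.mem_univ _, hq⟩
        rw [← heqf, Finset.mem_filter] at hmem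
        exact absurd hmem.2 (not_le.mpr hxp)
      funext k
      rw [hF]
      simp only
      rw [key_floor_lemma θ s n hs0 x y hx hy hxy hnop k]
    intro x y hx hy hcxy
    rcases le_total x y with h | h
    · exact main x y hx hy h hcxy
    · exact (main y x hy hx h hcxy.symm).symm
  -- Step 3: assemble
  set S := {w : Fin n → A | ∃ i : ℕ, 1 ≤ i ∧ ∀ k : Fin n, w k = a (i + k)} with hS
  have hrep : ∀ w ∈ S, ∃ x : ℝ, x ∈ Set.Ico (0:ℝ) 1 ∧ w = F x := by
    intro w hw
    obtain ⟨i, hi, hwk⟩ := hw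
    refine ⟨Int.fract ((i:ℝ) * θ), ⟨Int.fract_nonneg _, Int.fract_lt_one _⟩, ?_⟩
    funext k
    rw [hwk k, haF i hi k]
  classical
  set φ : (Fin n → A) → ℕ := fun w =>
    if h : ∃ x : ℝ, x ∈ Set.Ico (0:ℝ) 1 ∧ w = F x then c h.choose else 0 with hφ
  have hinj : Set.InjOn φ S := by
    intro w hw w' hw' hφeq
    have h1 := hrep w hw
    have h2 := hrep w' hw'
    rw [hφ] at hφeq
    simp only [dif_pos h1, dif_pos h2] at hφeq
    obtain ⟨hx1, hwx1⟩ := h1.choose_spec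
    obtain ⟨hx2, hwx2⟩ := h2.choose_spec
    rw [hwx1, hwx2]
    exact hkey _ _ hx1 hx2 hφeq
  have hmap : Set.MapsTo φ S ↑(Finset.range (s * n + 1)) := by
    intro w hw
    have h1 := hrep w hw
    simp only [hφ, dif_pos h1, Finset.coe_range, Set.mem_Iio]
    exact Nat.lt_succ_of_le (hcbound _)
  have hfin : S.Finite := by
    apply Set.Finite.of_finite_image _ hinj
    exact Set.Finite.subset (Finset.range (s * n + 1)).finite_toSet
      (Set.image_subset_iff.mpr hmap)
  refine ⟨hfin, ?_⟩
  calc S.ncard ≤ (↑(Finset.range (s * n + 1)) : Set ℕ).ncard :=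
        Set.ncard_le_ncard_of_injOn φ hmap hinj ((Finset.range (s * n + 1)).finite_toSet)
    _ = s * n + 1 := by rw [Set.ncard_coe_finset, Finset.card_range]
end

section
/- Let θ be an irrational number with bounded partial quotients, and let a be the word obtained by coding the rotation by θ with respect to rational intervals of denominator s. Then there exists a constant ν > 0 such that for infinitely many q (the denominators of convergents of θ satisfying |qθ - p| < 1/q), and for any ρ > 1, the number of indices i ∈ (q, ρq] with a_i ≠ a_{i-q} is at most ρ/ν. -/
set_option maxHeartbeats 1000000

open Finset

lemma gap_count {q N : ℕ} (S : Finset ℕ) (hS : S ⊆ Finset.Ioc q N) (g : ℝ) (hg : 0 < g)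
    (hgap : ∀ i ∈ S, ∀ j ∈ S, i < j → g < ((j : ℝ) - (i : ℝ))) :
    (S.card : ℝ) ≤ ((N - q : ℕ) : ℝ) / g + 1 := by
  set G : ℕ := ⌊g⌋₊ + 1 with hG
  have hGpos : 0 < G := Nat.succ_pos _
  have hgG : g < G := by
    have := Nat.lt_floor_add_one g
    push_cast [hG]; linarith
  have hstep : ∀ i ∈ S, ∀ j ∈ S, i < j → i + G ≤ j := by
    intro i hi j hj hij
    have h1 := hgap i hi j hj hij
    have h2 : ((j - i : ℕ) : ℝ) = (j : ℝ) - i := by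
      push_cast [Nat.cast_sub hij.le]; ring
    have hgl : g < ((j - i : ℕ) : ℝ) := by rw [h2]; exact h1
    have h3 : G ≤ j - i := by
      have hf : (⌊g⌋₊ : ℝ) ≤ g := Nat.floor_le hg.le
      have hlt : ((⌊g⌋₊ : ℕ) : ℝ) < ((j - i : ℕ) : ℝ) := lt_of_le_of_lt hf hgl
      have := Nat.cast_lt.mp hlt
      omega
    omega
  have hcard : S.card ≤ (N - (q+1)) / G + 1 := by
    have hmaps : ∀ i ∈ S, (i - (q+1)) / G ∈ Finset.range ((N - (q+1)) / G + 1) := by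
      intro i hi
      have hmem := hS hi
      simp only [Finset.mem_Ioc] at hmem
      simp only [Finset.mem_range, Nat.lt_succ_iff]
      exact Nat.div_le_div_right (by omega)
    have hinj : ∀ i ∈ S, ∀ j ∈ S, (i - (q+1)) / G = (j - (q+1)) / G → i = j := by
      intro i hi j hj hij
      by_contra hne
      rcases Nat.lt_or_ge i j with h | h
      · have h1 := hstep i hi j hj h
        have hq1 : q + 1 ≤ i := by have := hS hi; simp only [Finset.mem_Ioc] at this; omega
        have : (i - (q+1)) / G < (j - (q+1)) / G := by
          have h2 : i - (q+1) + G ≤ j - (q+1) := by omega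
          calc (i - (q+1)) / G < (i - (q+1) + G) / G := by
                rw [Nat.add_div_right _ hGpos]; omega
            _ ≤ (j - (q+1)) / G := Nat.div_le_div_right h2
        omega
      · have hlt : j < i := by omega
        have h1 := hstep j hj i hi hlt
        have hq1 : q + 1 ≤ j := by have := hS hj; simp only [Finset.mem_Ioc] at this; omega
        have : (j - (q+1)) / G < (i - (q+1)) / G := by
          have h2 : j - (q+1) + G ≤ i - (q+1) := by omega
          calc (j - (q+1)) / G < (j - (q+1) + G) / G := by
                rw [Nat.add_div_right _ hGpos]; omega
            _ ≤ (i - (q+1)) / G := Nat.div_le_div_right h2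
        omega
    calc S.card ≤ (Finset.range ((N - (q+1)) / G + 1)).card :=
          Finset.card_le_card_of_injOn _ hmaps hinj
      _ = (N - (q+1)) / G + 1 := Finset.card_range _
  have h4 : (((N - (q+1)) / G : ℕ) : ℝ) ≤ ((N - q : ℕ) : ℝ) / g := by
    calc (((N - (q+1)) / G : ℕ) : ℝ) ≤ ((N - (q+1) : ℕ) : ℝ) / G := Nat.cast_div_le
      _ ≤ ((N - q : ℕ) : ℝ) / G := by
          have h5 : N - (q+1) ≤ N - q := by omega
          apply div_le_div_of_nonneg_right (by exact_mod_cast h5) (by positivity)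
      _ ≤ ((N - q : ℕ) : ℝ) / g := by
          apply div_le_div_of_nonneg_left (by positivity) hg hgG.le
  calc (S.card : ℝ) ≤ (((N - (q+1)) / G + 1 : ℕ) : ℝ) := by exact_mod_cast hcard
    _ ≤ ((N - q : ℕ) : ℝ) / g + 1 := by push_cast; linarith

lemma exists_good_q (θ : ℝ) (hθ : Irrational θ) (κ : ℝ) (hκpos : 0 < κ)
    (hbad : ∀ (P : ℤ) (Q : ℕ), 0 < Q → κ / (Q : ℝ) ≤ |(Q : ℝ) * θ - (P : ℝ)|) (Q₀ : ℕ) :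
    ∃ q : ℕ, Q₀ < q ∧ ∃ P : ℤ, |(q : ℝ) * θ - (P : ℝ)| < 1 / (q : ℝ) := by
  set ε : ℝ := κ / ((Q₀ : ℝ) + 1) ^ 2 with hε
  have hεpos : 0 < ε := by positivity
  obtain ⟨r₀, hr₀1, hr₀2⟩ := exists_rat_btwn (show θ - ε < θ by linarith)
  have hr₀ : |θ - (r₀ : ℝ)| < ε := by rw [abs_lt]; constructor <;> linarith
  obtain ⟨r, hr1, hr2⟩ := Real.exists_rat_abs_sub_lt_and_lt_of_irrational hθ r₀
  have hrε : |θ - (r : ℝ)| < ε := hr2.trans hr₀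
  set q : ℕ := r.den with hqdef
  have hq0 : 0 < q := r.pos
  have hq0' : (0 : ℝ) < q := by exact_mod_cast hq0
  have hcast : (r : ℝ) = (r.num : ℝ) / (q : ℝ) := by rw [Rat.cast_def]
  have habs : |(q : ℝ) * θ - (r.num : ℝ)| = (q : ℝ) * |θ - (r : ℝ)| := by
    rw [← abs_of_pos hq0', ← abs_mul]
    congr 1
    rw [hcast]; field_simp; rw [abs_of_pos hq0']; ring
  refine ⟨q, ?_, r.num, ?_⟩
  · have h1 : κ / (q : ℝ) ≤ |(q : ℝ) * θ - (r.num : ℝ)| := hbad r.num q hq0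
    have h2 : |(q : ℝ) * θ - (r.num : ℝ)| < (q : ℝ) * ε := by
      rw [habs]; exact (mul_lt_mul_iff_right₀ hq0').mpr hrε
    have h3 : κ / (q : ℝ) < (q : ℝ) * ε := lt_of_le_of_lt h1 h2
    by_contra hcon
    push_neg at hcon
    have hqQ : (q : ℝ) ≤ (Q₀ : ℝ) := by exact_mod_cast hcon
    have h4 : (q : ℝ) * ε ≤ κ / (q : ℝ) := by
      rw [hε, mul_div_assoc', div_le_div_iff₀ (by positivity) hq0']
      have hqq : (q : ℝ) * (q : ℝ) ≤ (Q₀ : ℝ) * (Q₀ : ℝ) :=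
        mul_le_mul hqQ hqQ hq0'.le (Nat.cast_nonneg _)
      nlinarith [Nat.cast_nonneg (α := ℝ) Q₀]
    linarith
  · have h2 : |(q : ℝ) * θ - (r.num : ℝ)| < (q : ℝ) * (1 / (q : ℝ) ^ 2) := by
      rw [habs]
      exact (mul_lt_mul_iff_right₀ hq0').mpr hr1
    calc |(q : ℝ) * θ - (r.num : ℝ)| < (q : ℝ) * (1 / (q : ℝ) ^ 2) := h2
      _ = 1 / (q : ℝ) := by field_simp

/-- Coding of a rotation by a badly approximable `θ`: there is `ν > 0` such that for
infinitely many `q` (denominators of convergents, i.e. `|q θ - p| < 1/q` for some integer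
`p`), and for any `ρ > 1`, the number of indices `i ∈ (q, ρ q]` with `a_i ≠ a_{i-q}` is at
most `ρ / ν`. -/
theorem stmt_10 {A : Type*} [DecidableEq A] (θ : ℝ) (hθ : Irrational θ) (hθ01 : θ ∈ Set.Ioo (0 : ℝ) 1)
    (κ : ℝ) (hκpos : 0 < κ)
    (hbad : ∀ (P : ℤ) (Q : ℕ), 0 < Q → κ / (Q : ℝ) ≤ |(Q : ℝ) * θ - (P : ℝ)|)
    (s : ℕ) (hs : 2 ≤ s) (letters : ℕ → A) (a : ℕ → A)
    (ha : ∀ i : ℕ, 1 ≤ i → ∀ j : ℕ, 1 ≤ j → j ≤ s →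
      Int.fract ((i : ℝ) * θ) ∈ Set.Ioo (((j : ℝ) - 1) / (s : ℝ)) ((j : ℝ) / (s : ℝ)) →
      a i = letters j) :
    ∃ ν : ℝ, 0 < ν ∧ ∀ Q₀ : ℕ, ∃ q : ℕ, Q₀ < q ∧
      (∃ P : ℤ, |(q : ℝ) * θ - (P : ℝ)| < 1 / (q : ℝ)) ∧
      ∀ ρ : ℝ, 1 < ρ →
        (((Finset.Ioc q (Nat.floor (ρ * (q : ℝ)))).filter fun i => a i ≠ a (i - q)).card : ℝ)
          ≤ ρ / ν := by
  classical
  have hs0 : (0 : ℝ) < s := by positivity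
  have hfr : ∀ i : ℕ, 1 ≤ i → Irrational (Int.fract ((i : ℝ) * θ)) := by
    intro i hi
    have h1 : Irrational ((i : ℝ) * θ) := hθ.natCast_mul (by omega)
    rw [← Int.self_sub_floor]
    exact h1.sub_intCast ⌊(i : ℝ) * θ⌋
  have hx0 : ∀ i : ℕ, 1 ≤ i → 0 < Int.fract ((i : ℝ) * θ) := by
    intro i hi
    rcases lt_or_eq_of_le (Int.fract_nonneg ((i : ℝ) * θ)) with h | h
    · exact h
    · exact absurd h.symm (by simpa using (hfr i hi).ne_int 0)
  have hx1 : ∀ i : ℕ, Int.fract ((i : ℝ) * θ) < 1 := fun i => Int.fract_lt_one _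
  set J : ℕ → ℕ := fun i => (⌈(s : ℝ) * Int.fract ((i : ℝ) * θ)⌉).toNat with hJdef
  have hJ : ∀ i : ℕ, 1 ≤ i → (1 ≤ J i ∧ J i ≤ s) ∧
      ((J i : ℝ) = (⌈(s : ℝ) * Int.fract ((i : ℝ) * θ)⌉ : ℝ)) ∧
      Int.fract ((i : ℝ) * θ) ∈ Set.Ioo (((J i : ℝ) - 1) / (s : ℝ)) ((J i : ℝ) / (s : ℝ)) := by
    intro i hi
    set x := Int.fract ((i : ℝ) * θ) with hx
    have hx0' : 0 < x := hx0 i hi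
    have hx1' : x < 1 := hx1 i
    have hxirr : Irrational ((s : ℝ) * x) := (hfr i hi).natCast_mul (by omega)
    have hc1 : (1 : ℤ) ≤ ⌈(s : ℝ) * x⌉ := Int.ceil_pos.mpr (by positivity)
    have hcs : ⌈(s : ℝ) * x⌉ ≤ (s : ℤ) := Int.ceil_le.mpr (by push_cast; nlinarith)
    have hJn : J i = (⌈(s : ℝ) * x⌉).toNat := rfl
    have hJb : 1 ≤ J i ∧ J i ≤ s := by omega
    have hJcast : ((J i : ℕ) : ℝ) = (⌈(s : ℝ) * x⌉ : ℝ) := by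
      rw [hJn, ← Int.cast_natCast, Int.toNat_of_nonneg (le_trans zero_le_one hc1)]
    refine ⟨hJb, hJcast, ?_, ?_⟩
    · rw [div_lt_iff₀ hs0, hJcast]
      have := Int.ceil_lt_add_one ((s : ℝ) * x)
      linarith [this]
    · rw [lt_div_iff₀ hs0, hJcast]
      have hle : (s : ℝ) * x ≤ (⌈(s : ℝ) * x⌉ : ℝ) := Int.le_ceil _
      have hne : (s : ℝ) * x ≠ (⌈(s : ℝ) * x⌉ : ℝ) := hxirr.ne_int _
      have := lt_of_le_of_ne hle hne
      linarith
  have hkey : ∀ i : ℕ, 1 ≤ i → a i = letters (J i) := by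
    intro i hi
    obtain ⟨⟨h1, h2⟩, _, h3⟩ := hJ i hi
    exact ha i hi (J i) h1 h2 h3
  -- choose ν
  refine ⟨κ / ((s + 1 : ℝ) * (κ + 2)), by positivity, fun Q₀ => ?_⟩
  obtain ⟨q, hQ₀q, P, hP⟩ := exists_good_q θ hθ κ hκpos hbad Q₀
  have hq1 : 1 ≤ q := by omega
  have hq0' : (0 : ℝ) < q := by exact_mod_cast hq1
  refine ⟨q, hQ₀q, ⟨P, hP⟩, fun ρ hρ => ?_⟩
  set N := Nat.floor (ρ * (q : ℝ)) with hN
  set d := (q : ℝ) * θ - (P : ℝ) with hd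
  have hdlt : |d| < 1 / q := hP
  have hdpos : 0 < |d| := lt_of_lt_of_le (by positivity) (hbad P q hq1)
  have hdlt1 : |d| < 1 := lt_of_lt_of_le hdlt (by
    rw [div_le_one hq0']; exact_mod_cast hq1)
  -- mismatch implies near a boundary point
  have hnear : ∀ i ∈ Finset.Ioc q N, a i ≠ a (i - q) →
      ∃ k : ℕ, k ≤ s ∧ |Int.fract ((i : ℝ) * θ) - (k : ℝ) / s| ≤ |d| := by
    intro i hi hne
    simp only [Finset.mem_Ioc] at hi
    have hi1 : 1 ≤ i := by omega
    have hiq1 : 1 ≤ i - q := by omega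
    set y := Int.fract ((i : ℝ) * θ) with hy
    set z := Int.fract (((i - q : ℕ) : ℝ) * θ) with hz
    have hy0 : 0 < y := hx0 i hi1
    have hy1 : y < 1 := hx1 i
    have hz0 : 0 < z := hx0 (i - q) hiq1
    have hz1 : z < 1 := hx1 (i - q)
    have hJne : J i ≠ J (i - q) := by
      intro h
      exact hne (by rw [hkey i hi1, hkey (i - q) hiq1, h])
    have hcast : ((i - q : ℕ) : ℝ) = (i : ℝ) - q := by
      push_cast [Nat.cast_sub hi.1.le]; ring
    obtain ⟨t, ht⟩ : ∃ t : ℤ, y - z = d + t := by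
      refine ⟨P - ⌊(i : ℝ) * θ⌋ + ⌊((i - q : ℕ) : ℝ) * θ⌋, ?_⟩
      simp only [hy, hz, Int.fract, hd, hcast]
      push_cast
      ring
    have htabs : |(t : ℝ)| < 2 := by
      have : (t : ℝ) = (y - z) - d := by linarith
      rw [this]
      calc |(y - z) - d| ≤ |y - z| + |d| := abs_sub _ _
        _ < 1 + 1 := by
            have : |y - z| < 1 := abs_lt.mpr ⟨by linarith, by linarith⟩
            linarith
        _ = 2 := by norm_num
    have htcases : t = 0 ∨ t = 1 ∨ t = -1 := by
      have h1 : -(2 : ℝ) < t := by have := abs_lt.mp htabs; linarith [this.1]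
      have h2 : (t : ℝ) < 2 := (abs_lt.mp htabs).2
      have h1' : (-2 : ℤ) < t := by exact_mod_cast h1
      have h2' : t < 2 := by exact_mod_cast h2
      omega
    rcases htcases with ht0 | ht1 | htm1
    · -- no wrap: a boundary point lies between z and y
      subst ht0
      simp only [Int.cast_zero, add_zero] at ht
      have hdne : d ≠ 0 := by intro h; rw [h] at hdpos; simp at hdpos
      obtain ⟨⟨hJ1iq, hJsiq⟩, hJciq, hIooiq⟩ := hJ (i - q) hiq1
      obtain ⟨⟨hJ1i, hJsi⟩, hJci, hIooi⟩ := hJ i hi1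
      rcases lt_trichotomy z y with hzy | hzy | hzy
      · -- z < y, use k = J (i-q)
        refine ⟨J (i - q), hJsiq, ?_⟩
        have hcle : ⌈(s : ℝ) * z⌉ ≤ ⌈(s : ℝ) * y⌉ :=
          Int.ceil_le_ceil (mul_le_mul_of_nonneg_left hzy.le hs0.le)
        have hclt : ⌈(s : ℝ) * z⌉ < ⌈(s : ℝ) * y⌉ := by
          rcases lt_or_eq_of_le hcle with h | h
          · exact h
          · exfalso; apply hJne; simp only [hJdef]; rw [← hy, ← hz, h]
        have hzk : z ≤ (J (i - q) : ℝ) / s := by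
          rw [le_div_iff₀ hs0, hJciq]
          calc z * s = (s : ℝ) * z := by ring
            _ ≤ _ := Int.le_ceil _
        have hky : (J (i - q) : ℝ) / s < y := by
          rw [div_lt_iff₀ hs0, hJciq]
          have h1 : (⌈(s : ℝ) * y⌉ : ℝ) < (s : ℝ) * y + 1 := Int.ceil_lt_add_one _
          have h2 : (⌈(s : ℝ) * z⌉ : ℝ) + 1 ≤ (⌈(s : ℝ) * y⌉ : ℝ) := by
            exact_mod_cast Int.add_one_le_iff.mpr hclt
          have hcm : y * s = s * y := mul_comm y s
          linarith
        have hd0 : 0 < d := by linarith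
        rw [abs_of_pos (by linarith : (0:ℝ) < y - (J (i - q) : ℝ) / s), abs_of_pos hd0]
        linarith
      · exact absurd (by linarith : d = 0) hdne
      · -- y < z, use k = J i
        refine ⟨J i, hJsi, ?_⟩
        have hcle : ⌈(s : ℝ) * y⌉ ≤ ⌈(s : ℝ) * z⌉ :=
          Int.ceil_le_ceil (mul_le_mul_of_nonneg_left hzy.le hs0.le)
        have hclt : ⌈(s : ℝ) * y⌉ < ⌈(s : ℝ) * z⌉ := by
          rcases lt_or_eq_of_le hcle with h | h
          · exact h
          · exfalso; apply hJne; simp only [hJdef]; rw [← hy, ← hz, h]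
        have hyk : y ≤ (J i : ℝ) / s := by
          rw [le_div_iff₀ hs0, hJci]
          calc y * s = (s : ℝ) * y := by ring
            _ ≤ _ := Int.le_ceil _
        have hkz : (J i : ℝ) / s < z := by
          rw [div_lt_iff₀ hs0, hJci]
          have h1 : (⌈(s : ℝ) * z⌉ : ℝ) < (s : ℝ) * z + 1 := Int.ceil_lt_add_one _
          have h2 : (⌈(s : ℝ) * y⌉ : ℝ) + 1 ≤ (⌈(s : ℝ) * z⌉ : ℝ) := by
            exact_mod_cast Int.add_one_le_iff.mpr hclt
          have hcm : z * s = s * z := mul_comm z s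
          linarith
        have hd0 : d < 0 := by linarith
        rw [abs_of_neg hd0]
        rw [abs_of_nonpos (by linarith : y - (J i : ℝ) / s ≤ 0)]
        linarith
    · -- t = 1 : wrap, y near 1 = s/s
      subst ht1
      simp only [Int.cast_one] at ht
      refine ⟨s, le_refl s, ?_⟩
      have hss : (s : ℝ) / s = 1 := div_self (ne_of_gt hs0)
      rw [hss]
      rw [abs_of_nonpos (by linarith : y - 1 ≤ 0)]
      have : 1 - y = -z - d := by linarith
      have hle : 1 - y ≤ -d := by linarith
      linarith [neg_abs_le d, le_abs_self d, neg_le_abs d]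
    · -- t = -1 : wrap, y near 0
      subst htm1
      simp only [Int.cast_neg, Int.cast_one] at ht
      refine ⟨0, by omega, ?_⟩
      simp only [Nat.cast_zero, zero_div, sub_zero]
      rw [abs_of_pos hy0]
      have : y = z + d - 1 := by linarith
      have : y ≤ d := by linarith
      linarith [le_abs_self d]
  -- counting
  set S := (Finset.Ioc q N).filter (fun i => a i ≠ a (i - q)) with hS
  set K : ℕ → ℕ := fun i =>
    if h : ∃ k : ℕ, k ≤ s ∧ |Int.fract ((i : ℝ) * θ) - (k : ℝ) / s| ≤ |d| then h.choose else 0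
    with hKdef
  have hK : ∀ i ∈ S, K i ≤ s ∧ |Int.fract ((i : ℝ) * θ) - (K i : ℝ) / s| ≤ |d| := by
    intro i hi
    simp only [hS, Finset.mem_filter] at hi
    have h := hnear i hi.1 hi.2
    simp only [hKdef]
    rw [dif_pos h]
    exact h.choose_spec
  have hfib : S.card = ∑ k ∈ Finset.range (s + 1), (S.filter (fun i => K i = k)).card := by
    apply Finset.card_eq_sum_card_fiberwise
    intro i hi
    exact Finset.mem_range.mpr (Nat.lt_succ_of_le (hK i hi).1)
  have hfibbound : ∀ k : ℕ, ((S.filter (fun i => K i = k)).card : ℝ) ≤ 2 * (ρ - 1) / κ + 1 := by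
    intro k
    have hsub : S.filter (fun i => K i = k) ⊆ Finset.Ioc q N := by
      intro i hi
      simp only [hS, Finset.mem_filter] at hi
      exact hi.1.1
    have hgpos : (0 : ℝ) < κ * q / 2 := by positivity
    have hgap : ∀ i ∈ S.filter (fun i => K i = k), ∀ j ∈ S.filter (fun i => K i = k),
        i < j → κ * q / 2 < ((j : ℝ) - (i : ℝ)) := by
      intro i hi j hj hij
      have hiS : i ∈ S := Finset.mem_filter.mp hi |>.1
      have hjS : j ∈ S := Finset.mem_filter.mp hj |>.1
      have hki : K i = k := Finset.mem_filter.mp hi |>.2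
      have hkj : K j = k := Finset.mem_filter.mp hj |>.2
      have h1 := (hK i hiS).2
      have h2 := (hK j hjS).2
      rw [hki] at h1; rw [hkj] at h2
      have hdiff : |Int.fract ((j : ℝ) * θ) - Int.fract ((i : ℝ) * θ)| ≤ 2 * |d| := by
        calc |Int.fract ((j : ℝ) * θ) - Int.fract ((i : ℝ) * θ)|
            = |(Int.fract ((j : ℝ) * θ) - (k : ℝ) / s) - (Int.fract ((i : ℝ) * θ) - (k : ℝ) / s)| := by
              congr 1; ring
          _ ≤ |Int.fract ((j : ℝ) * θ) - (k : ℝ) / s| + |Int.fract ((i : ℝ) * θ) - (k : ℝ) / s| :=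
              abs_sub _ _
          _ ≤ 2 * |d| := by linarith
      obtain ⟨m, hm⟩ : ∃ m : ℤ,
          Int.fract ((j : ℝ) * θ) - Int.fract ((i : ℝ) * θ) = ((j - i : ℕ) : ℝ) * θ - m := by
        refine ⟨⌊(j : ℝ) * θ⌋ - ⌊(i : ℝ) * θ⌋, ?_⟩
        have hcast : ((j - i : ℕ) : ℝ) = (j : ℝ) - i := by
          push_cast [Nat.cast_sub hij.le]; ring
        simp only [Int.fract, hcast]
        push_cast
        ring
      have hji : 0 < j - i := by omega
      have hb := hbad m (j - i) hji
      rw [← hm] at hb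
      have hb2 : κ / ((j - i : ℕ) : ℝ) ≤ 2 * |d| := le_trans hb hdiff
      have hji' : (0 : ℝ) < ((j - i : ℕ) : ℝ) := by exact_mod_cast hji
      have h2d : 2 * |d| < 2 / q := by
        have : 2 / (q : ℝ) = 2 * (1 / q) := by ring
        linarith
      have : κ / ((j - i : ℕ) : ℝ) < 2 / q := lt_of_le_of_lt hb2 h2d
      rw [div_lt_div_iff₀ hji' hq0'] at this
      have hcast : ((j - i : ℕ) : ℝ) = (j : ℝ) - i := by
        push_cast [Nat.cast_sub hij.le]; ring
      rw [hcast] at this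
      linarith
    have := gap_count (S.filter (fun i => K i = k)) hsub (κ * q / 2) hgpos hgap
    have hNq : ((N - q : ℕ) : ℝ) ≤ (ρ - 1) * q := by
      rcases le_or_gt q N with h | h
      · have : ((N - q : ℕ) : ℝ) = (N : ℝ) - q := by
          push_cast [Nat.cast_sub h]; ring
        rw [this]
        have hNle : (N : ℝ) ≤ ρ * q := Nat.floor_le (by positivity)
        nlinarith
      · have : N - q = 0 := by omega
        rw [this]
        simp only [Nat.cast_zero]
        nlinarith
    have hdivle : ((N - q : ℕ) : ℝ) / (κ * q / 2) ≤ 2 * (ρ - 1) / κ := by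
      rw [div_le_iff₀ hgpos]
      have heq : 2 * (ρ - 1) / κ * (κ * q / 2) = (ρ - 1) * q := by
        field_simp
      rw [heq]
      exact hNq
    linarith
  -- final combination
  have hcardle : (S.card : ℝ) ≤ (s + 1 : ℝ) * (2 * (ρ - 1) / κ + 1) := by
    rw [hfib]
    push_cast
    calc (∑ k ∈ Finset.range (s + 1), ((S.filter (fun i => K i = k)).card : ℝ))
        ≤ ∑ k ∈ Finset.range (s + 1), (2 * (ρ - 1) / κ + 1) :=
          Finset.sum_le_sum (fun k _ => hfibbound k)
      _ = (s + 1 : ℝ) * (2 * (ρ - 1) / κ + 1) := by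
          rw [Finset.sum_const, Finset.card_range]
          push_cast
          ring
  have hfinal : (s + 1 : ℝ) * (2 * (ρ - 1) / κ + 1) ≤ ρ / (κ / ((s + 1 : ℝ) * (κ + 2))) := by
    rw [div_div_eq_mul_div]
    have e2 : (s + 1 : ℝ) * (2 * (ρ - 1) / κ + 1) = ((s + 1 : ℝ) * (2 * (ρ - 1) + κ)) / κ := by
      field_simp
      try ring
    rw [e2, div_le_div_iff₀ hκpos hκpos]
    have hsp : (0 : ℝ) ≤ (s : ℝ) + 1 := by positivity
    nlinarith [mul_nonneg (mul_nonneg hsp hκpos.le) (sub_pos.mpr hρ).le]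
  exact le_trans hcardle hfinal
end

section
/- Let θ be an irrational number in (0,1) with unbounded partial quotients, and let a be the coding of the rotation by θ with respect to rational intervals of denominator s. Then for every ρ > 1 there are infinitely many q such that a_i = a_{i-q} for all i ∈ (q, ρq]. -/
private lemma stmt11_gap (s q : ℕ) (r' k : ℤ) (hs : (0:ℝ) < s) (hq : (0:ℝ) < q)
    (h1 : (r':ℝ)/q < (k:ℝ)/s) (h2 : (k:ℝ)/s < (r':ℝ)/q + 1/(2*s*q)) : False := by
  have hA : (r':ℝ)*s < (k:ℝ)*q := by
    rw [div_lt_div_iff₀ hq hs] at h1; linarith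
  have hAz : r'*(s:ℤ) < k*q := by exact_mod_cast hA
  have hB : ((r'*(s:ℤ) : ℤ):ℝ) + 1 ≤ ((k*(q:ℤ):ℤ):ℝ) := by
    exact_mod_cast Int.add_one_le_iff.mpr hAz
  push_cast at hB
  have h2' := mul_lt_mul_of_pos_right h2 (mul_pos hs hq)
  have e1 : (k:ℝ)/s*((s:ℝ)*q) = (k:ℝ)*q := by field_simp
  have e2 : ((r':ℝ)/q + 1/(2*s*q))*((s:ℝ)*q) = (r':ℝ)*s + 1/2 := by
    field_simp
  rw [e1, e2] at h2'
  linarith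

private lemma stmt11_pick (s : ℕ) (hs2 : 2 ≤ s) (z w : ℝ) (h0 : 0 ≤ z) (h1 : z < 1)
    (hzw : z ≤ w)
    (excl : ∀ k : ℤ, ¬(z ≤ (k:ℝ)/s ∧ (k:ℝ)/s ≤ w)) :
    ∃ j : ℕ, 1 ≤ j ∧ j ≤ s ∧ ((j:ℝ)-1)/s < z ∧ w < (j:ℝ)/s := by
  have hs0 : (0:ℝ) < s := by
    have : 0 < s := by omega
    exact_mod_cast this
  set n : ℕ := ⌊(s:ℝ)*z⌋₊ with hn
  have hnle : (n:ℝ) ≤ (s:ℝ)*z := Nat.floor_le (by positivity)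
  have hlt : (s:ℝ)*z < n + 1 := Nat.lt_floor_add_one _
  refine ⟨n+1, by omega, ?_, ?_, ?_⟩
  · have hns : n < s := (Nat.floor_lt (by positivity)).mpr (by nlinarith)
    omega
  · push_cast
    have he : ((n:ℝ) + 1 - 1) = n := by ring
    rw [he]
    rcases lt_or_eq_of_le hnle with h | h
    · rw [div_lt_iff₀ hs0]; linarith
    · exfalso
      refine excl (n:ℤ) ⟨?_, ?_⟩
      · push_cast; rw [le_div_iff₀ hs0]; linarith
      · push_cast; rw [div_le_iff₀ hs0]
        nlinarith [mul_le_mul_of_nonneg_left hzw hs0.le]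
  · by_contra hcon
    push_neg at hcon
    refine excl ((n:ℤ)+1) ⟨?_, ?_⟩
    · push_cast; rw [le_div_iff₀ hs0]; nlinarith
    · push_cast; push_cast at hcon; linarith

set_option maxHeartbeats 1600000 in
/-- Coding of a rotation by a `θ` with unbounded partial quotients: for every `ρ > 1` there
are infinitely many `q` such that `a_i = a_{i-q}` for all `i ∈ (q, ρ q]`. -/
theorem stmt_11 {A : Type*} (θ : ℝ) (hθ : Irrational θ) (hθ01 : θ ∈ Set.Ioo (0 : ℝ) 1)
    (s : ℕ) (hs : 2 ≤ s) (letters : ℕ → A) (a : ℕ → A)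
    (ha : ∀ i : ℕ, 1 ≤ i → ∀ j : ℕ, 1 ≤ j → j ≤ s →
      Int.fract ((i : ℝ) * θ) ∈ Set.Ioo (((j : ℝ) - 1) / (s : ℝ)) ((j : ℝ) / (s : ℝ)) →
      a i = letters j)
    (hub : ∀ κ : ℝ, 0 < κ → ∀ Q₀ : ℕ, ∃ (q : ℕ) (P : ℤ), Q₀ < q ∧ Int.gcd P (q : ℤ) = 1 ∧
      |(q : ℝ) * θ - (P : ℝ)| < κ / (q : ℝ)) :
    ∀ ρ : ℝ, 1 < ρ → ∀ Q₀ : ℕ, ∃ q : ℕ, Q₀ < q ∧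
      ∀ i : ℕ, q < i → (i : ℝ) ≤ ρ * (q : ℝ) → a i = a (i - q) := by
  intro ρ hρ Q₀
  have hs0 : (0:ℝ) < s := by
    have : 0 < s := by omega
    exact_mod_cast this
  have hsne : (s:ℝ) ≠ 0 := ne_of_gt hs0
  have hρ0 : (0:ℝ) < ρ := lt_trans one_pos hρ
  have hρ1 : (0:ℝ) < ρ + 1 := by linarith
  have hρ1ne : ρ + 1 ≠ 0 := ne_of_gt hρ1
  obtain ⟨κ, hκdef⟩ : ∃ κ : ℝ, κ = 1 / (2 * s * (ρ + 1)) := ⟨_, rfl⟩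
  have hκ : 0 < κ := by rw [hκdef]; positivity
  obtain ⟨q, P, hq, -, happ⟩ := hub κ hκ Q₀
  have hq0 : 0 < q := lt_of_le_of_lt (Nat.zero_le _) hq
  have hq0' : (0:ℝ) < q := by exact_mod_cast hq0
  refine ⟨q, hq, ?_⟩
  intro i hqi hiρ
  obtain ⟨m, hmdef⟩ : ∃ m : ℕ, m = i - q := ⟨_, rfl⟩
  rw [← hmdef]
  have him : i = m + q := by omega
  have hm1 : 1 ≤ m := by omega
  obtain ⟨ε, hεdef⟩ : ∃ e : ℝ, e = (q:ℝ) * θ - (P:ℝ) := ⟨_, rfl⟩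
  rw [← hεdef] at happ
  have hε0 : ε ≠ 0 := by
    rw [hεdef]
    intro h
    apply hθ
    refine ⟨(P:ℚ) / (q:ℚ), ?_⟩
    have hq0'' : ((q:ℚ):ℝ) ≠ 0 := by push_cast; exact ne_of_gt hq0'
    push_cast
    rw [div_eq_iff (by exact_mod_cast ne_of_gt hq0')]
    linarith [h]
  have hεκ : |ε| < κ / q := happ
  obtain ⟨r, hrdef⟩ : ∃ r : ℤ, r = ((m:ℤ) * P) % (q:ℤ) := ⟨_, rfl⟩
  have hqzne : ((q:ℕ):ℤ) ≠ 0 := by exact_mod_cast hq0.ne'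
  have hr0 : 0 ≤ r := hrdef ▸ Int.emod_nonneg _ hqzne
  have hrq : r < (q:ℤ) := hrdef ▸ Int.emod_lt_of_pos _ (by exact_mod_cast hq0)
  obtain ⟨r', hr'def⟩ : ∃ x : ℤ, x = if r = 0 ∧ ε < 0 then ((q:ℕ):ℤ) else r := ⟨_, rfl⟩
  -- fract computation
  have fract_eq : ∀ n : ℕ, 1 ≤ n → ((n:ℤ) * P) % (q:ℤ) = r →
      (n:ℝ) * |ε| / q < 1/(2*s*q) →
      Int.fract ((n:ℝ) * θ) = (r':ℝ)/q + (n:ℝ) * ε / q := by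
    intro n hn hmod hbd
    have hn0 : (0:ℝ) < n := by exact_mod_cast hn
    have hstep : (n:ℝ) * θ = (((((n:ℤ)*P)/(q:ℤ) : ℤ)) : ℝ) + ((r:ℝ)/q + (n:ℝ)*ε/q) := by
      have h2 : ((n:ℤ)*P) = (q:ℤ) * (((n:ℤ)*P)/(q:ℤ)) + r := by
        conv_lhs => rw [← Int.mul_ediv_add_emod ((n:ℤ)*P) (q:ℤ)]
        rw [hmod]
      have h2' : ((n:ℝ))*(P:ℝ) = (q:ℝ) * ((((n:ℤ)*P)/(q:ℤ) : ℤ):ℝ) + (r:ℝ) := by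
        exact_mod_cast h2
      rw [hεdef]
      field_simp
      linarith [h2']
    rw [hstep, Int.fract_intCast_add]
    have habs' : (n:ℝ)* |ε| * (2*s*q) < 1*q := by
      rw [div_lt_div_iff₀ hq0' (by positivity)] at hbd
      exact hbd
    have hs2 : (2:ℝ) ≤ s := by exact_mod_cast hs
    have hq1r : (1:ℝ) ≤ q := by exact_mod_cast hq0
    have hsmall : (n:ℝ)* |ε| < 1 := by
      by_contra hcon
      push_neg at hcon
      have ht : 1*(2*(s:ℝ)*q) ≤ (n:ℝ)* |ε| * (2*s*q) :=
        mul_le_mul_of_nonneg_right hcon (by positivity)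
      nlinarith [mul_nonneg (show (0:ℝ) ≤ (s:ℝ) - 1 by linarith) hq0'.le]
    have hnε1 : (n:ℝ)*ε ≤ (n:ℝ)* |ε| := mul_le_mul_of_nonneg_left (le_abs_self ε) hn0.le
    have hnε2 : -((n:ℝ)* |ε|) ≤ (n:ℝ)*ε := by
      have := mul_le_mul_of_nonneg_left (neg_abs_le ε) hn0.le
      linarith [this]
    by_cases hcase : r = 0 ∧ ε < 0
    · rw [hr'def, if_pos hcase]
      obtain ⟨hr00, hεneg⟩ := hcase
      have hu0 : (n:ℝ)*ε/q < 0 :=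
        div_neg_of_neg_of_pos (mul_neg_of_pos_of_neg hn0 hεneg) hq0'
      have hu1 : (-1:ℝ) < (n:ℝ)*ε/q := by
        rw [lt_div_iff₀ hq0']
        nlinarith [hnε2, hsmall, hq1r]
      rw [hr00]
      push_cast
      rw [zero_div, zero_add]
      have hfr : Int.fract ((n:ℝ)*ε/q) = Int.fract ((n:ℝ)*ε/q + ((1:ℤ):ℝ)) :=
        (Int.fract_add_intCast _ 1).symm
      rw [hfr, Int.fract_eq_self.mpr ⟨by push_cast; linarith, by push_cast; linarith⟩]
      rw [div_self (ne_of_gt hq0')]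
      push_cast
      ring
    · rw [hr'def, if_neg hcase]
      have hup : (r:ℝ) + (n:ℝ)*ε < q := by
        have : (r:ℝ) ≤ (q:ℝ) - 1 := by
          have : r + 1 ≤ (q:ℤ) := hrq
          have : ((r:ℤ):ℝ) + 1 ≤ ((q:ℕ):ℝ) := by exact_mod_cast this
          linarith
        linarith
      have hlo : 0 ≤ (r:ℝ) + (n:ℝ)*ε := by
        rcases lt_or_gt_of_ne hε0 with hneg | hpos
        · have hrne : r ≠ 0 := fun h => hcase ⟨h, hneg⟩
          have : 1 ≤ r := lt_of_le_of_ne hr0 (Ne.symm hrne)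
          have : (1:ℝ) ≤ (r:ℝ) := by exact_mod_cast this
          linarith
        · have : 0 ≤ (n:ℝ)*ε := by positivity
          have : (0:ℝ) ≤ (r:ℝ) := by exact_mod_cast hr0
          linarith [mul_nonneg hn0.le hpos.le]
      rw [show (r:ℝ)/q + (n:ℝ)*ε/q = ((r:ℝ) + (n:ℝ)*ε)/q by ring,
        Int.fract_eq_self.mpr ⟨div_nonneg hlo hq0'.le, (div_lt_one hq0').mpr hup⟩]
  -- mod and bound facts for m and i
  have hmodi : ((i:ℤ) * P) % (q:ℤ) = r := by
    have he : ((i:ℤ) * P) = (m:ℤ)*P + (q:ℤ)*P := by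
      have : (i:ℤ) = (m:ℤ) + (q:ℤ) := by exact_mod_cast him
      rw [this]; ring
    rw [he, Int.add_mul_emod_self_left, ← hrdef]
  have h2 : |ε| * q < κ := (lt_div_iff₀ hq0').mp hεκ
  have hκval : κ * (2*s*(ρ+1)) = 1 := by
    rw [hκdef]; field_simp
  have hbi : (i:ℝ) * |ε| / q < 1/(2*s*q) := by
    rw [div_lt_div_iff₀ hq0' (by positivity)]
    have h1 : (i:ℝ)* |ε| ≤ ρ*q* |ε| := mul_le_mul_of_nonneg_right hiρ (abs_nonneg ε)
    have t0 : (i:ℝ)* |ε| * (2*s*q) ≤ ρ*q* |ε| * (2*s*q) :=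
      mul_le_mul_of_nonneg_right h1 (by positivity)
    have e : ρ*(q:ℝ)* |ε| * (2*s*q) = |ε| * q*(2*s*ρ*q) := by ring
    rw [e] at t0
    have t1 : |ε| * (q:ℝ)*(2*s*ρ*q) < κ*(2*s*ρ*q) :=
      mul_lt_mul_of_pos_right h2 (by positivity)
    have t2 : κ*(2*s*ρ*(q:ℝ)) < q := by
      have he2 : κ*(2*s*ρ*(q:ℝ)) = (q:ℝ)*(κ*(2*s*(ρ+1))) - (q:ℝ)*(2*s*κ) := by ring
      rw [he2, hκval]
      nlinarith [mul_pos (mul_pos (by positivity : (0:ℝ) < 2*(s:ℝ)) hκ) hq0']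
    linarith
  have hmlei : (m:ℝ) ≤ (i:ℝ) := by exact_mod_cast (by omega : m ≤ i)
  have hbm : (m:ℝ) * |ε| / q < 1/(2*s*q) := by
    refine lt_of_le_of_lt ?_ hbi
    gcongr
  have hx : Int.fract ((m:ℝ)*θ) = (r':ℝ)/q + (m:ℝ)*ε/q := fract_eq m hm1 hrdef.symm hbm
  have hy : Int.fract ((i:ℝ)*θ) = (r':ℝ)/q + (i:ℝ)*ε/q := fract_eq i (by omega) hmodi hbi
  have hm0 : (0:ℝ) < m := by exact_mod_cast hm1
  have hmi : (m:ℝ) < (i:ℝ) := by exact_mod_cast (by omega : m < i)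
  have habsi : |(i:ℝ)*ε/q| < 1/(2*s*q) := by
    rw [abs_div, abs_mul, Nat.abs_cast, abs_of_pos hq0']; exact hbi
  have habsm : |(m:ℝ)*ε/q| < 1/(2*s*q) := by
    rw [abs_div, abs_mul, Nat.abs_cast, abs_of_pos hq0']; exact hbm
  rcases lt_or_gt_of_ne hε0 with hεneg | hεpos
  · -- ε < 0 : fract(iθ) < fract(mθ)
    have hu0 : (m:ℝ)*ε/q < 0 :=
      div_neg_of_neg_of_pos (mul_neg_of_pos_of_neg hm0 hεneg) hq0'
    have huv : (i:ℝ)*ε/q < (m:ℝ)*ε/q := by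
      rw [div_lt_div_iff₀ hq0' hq0']
      nlinarith [mul_lt_mul_of_neg_right hmi hεneg]
    have hvlow : -(1/(2*s*q)) < (i:ℝ)*ε/q := neg_lt_of_abs_lt habsi
    have hzw : Int.fract ((i:ℝ)*θ) ≤ Int.fract ((m:ℝ)*θ) := by
      rw [hx, hy]; linarith
    have excl : ∀ k : ℤ, ¬(Int.fract ((i:ℝ)*θ) ≤ (k:ℝ)/s ∧
        (k:ℝ)/s ≤ Int.fract ((m:ℝ)*θ)) := by
      rintro k ⟨l1, l2⟩
      refine stmt11_gap s q (-r') (-k) hs0 hq0' ?_ ?_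
      · push_cast
        rw [hx] at l2
        have : (k:ℝ)/s < (r':ℝ)/q := by linarith
        have hng : -((r':ℝ)/q) < -((k:ℝ)/s) := by linarith
        calc -(r':ℝ)/q = -((r':ℝ)/q) := by ring
          _ < -((k:ℝ)/s) := hng
          _ = -(k:ℝ)/s := by ring
      · push_cast
        rw [hy] at l1
        have h1 : (r':ℝ)/q - 1/(2*s*q) < (k:ℝ)/s := by linarith
        calc -(k:ℝ)/s = -((k:ℝ)/s) := by ring
          _ < -((r':ℝ)/q) + 1/(2*s*q) := by linarith
          _ = -(r':ℝ)/q + 1/(2*s*q) := by ring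
    obtain ⟨j, hj1, hjs, hjz, hjw⟩ := stmt11_pick s hs _ _
      (Int.fract_nonneg _) (Int.fract_lt_one _) hzw excl
    have e1 : a i = letters j := ha i (by omega) j hj1 hjs
      ⟨hjz, lt_of_le_of_lt hzw hjw⟩
    have e2 : a m = letters j := ha m hm1 j hj1 hjs
      ⟨lt_of_lt_of_le hjz hzw, hjw⟩
    rw [e1, e2]
  · -- ε > 0 : fract(mθ) < fract(iθ)
    have hu0 : 0 < (m:ℝ)*ε/q := div_pos (mul_pos hm0 hεpos) hq0'
    have huv : (m:ℝ)*ε/q < (i:ℝ)*ε/q := by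
      rw [div_lt_div_iff₀ hq0' hq0']
      nlinarith [mul_lt_mul_of_pos_right hmi hεpos]
    have hvhi : (i:ℝ)*ε/q < 1/(2*s*q) := lt_of_abs_lt habsi
    have hzw : Int.fract ((m:ℝ)*θ) ≤ Int.fract ((i:ℝ)*θ) := by
      rw [hx, hy]; linarith
    have excl : ∀ k : ℤ, ¬(Int.fract ((m:ℝ)*θ) ≤ (k:ℝ)/s ∧
        (k:ℝ)/s ≤ Int.fract ((i:ℝ)*θ)) := by
      rintro k ⟨l1, l2⟩
      refine stmt11_gap s q r' k hs0 hq0' ?_ ?_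
      · rw [hx] at l1; linarith
      · rw [hy] at l2; linarith
    obtain ⟨j, hj1, hjs, hjz, hjw⟩ := stmt11_pick s hs _ _
      (Int.fract_nonneg _) (Int.fract_lt_one _) hzw excl
    have e1 : a i = letters j := ha i (by omega) j hj1 hjs
      ⟨lt_of_lt_of_le hjz hzw, hjw⟩
    have e2 : a m = letters j := ha m hm1 j hj1 hjs
      ⟨hjz, lt_of_le_of_lt hzw hjw⟩
    rw [e1, e2]
end

section
/- For the Thue-Morse word t (the fixed point of 0 ↦ 01, 1 ↦ 10 starting with 0), for every n ≥ 0 the word U_n V_n V_n is a prefix of t, where U_n = τ^n(0) and V_n = τ^n(1) (each of length 2^n). Consequently the Diophantine exponent of t is at least 3/2. -/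
open Filter

/-- The image of a single letter under the `n`-th iterate of the Thue–Morse morphism
`τ(0) = 01`, `τ(1) = 10` (letters encoded as `Bool`, with `false = 0`). -/
def tmBlock : ℕ → Bool → List Bool
  | 0, b => [b]
  | n + 1, b => tmBlock n b ++ tmBlock n (!b)

/-- The Thue–Morse word: `t i` is the parity of the binary digit sum of `i`. -/
def thueMorse (i : ℕ) : Bool := decide ((Nat.digits 2 i).sum % 2 = 1)

/-- The word `a` admits the repetition pattern of Diophantine exponent `ρ`: there are integer
sequences `-1 ≤ r n < s n < t n` with `a[r n + 1, r n + t n - s n] = a[s n + 1, t n]`,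
`t n ≥ ρ * s n`, and `s n - r n → ∞`. -/
def DioCond (a : ℕ → Bool) (ρ : ℝ) : Prop :=
  ∃ r s t : ℕ → ℤ,
    (∀ n, -1 ≤ r n ∧ r n < s n ∧ s n < t n) ∧
    (∀ n, ∀ i : ℤ, 1 ≤ i → i ≤ t n - s n → a (r n + i).toNat = a (s n + i).toNat) ∧
    (∀ n, ρ * ((s n : ℝ)) ≤ ((t n : ℝ))) ∧
    Filter.Tendsto (fun n => s n - r n) Filter.atTop Filter.atTop

lemma tm_even (m : ℕ) : thueMorse (2 * m) = thueMorse m := by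
  rcases Nat.eq_zero_or_pos m with h | h
  · simp [h]
  · unfold thueMorse
    rw [Nat.digits_def' (by norm_num : 1 < 2) (by omega)]
    have h1 : (2 * m) % 2 = 0 := by omega
    have h2 : (2 * m) / 2 = m := by omega
    rw [h1, h2]
    simp

lemma tm_odd (m : ℕ) : thueMorse (2 * m + 1) = !thueMorse m := by
  unfold thueMorse
  rw [Nat.digits_def' (by norm_num : 1 < 2) (by omega)]
  have h1 : (2 * m + 1) % 2 = 1 := by omega
  have h2 : (2 * m + 1) / 2 = m := by omega
  rw [h1, h2]
  simp only [List.sum_cons]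
  rcases Nat.mod_two_eq_zero_or_one (Nat.digits 2 m).sum with h | h <;>
    simp [Nat.add_mod, h]

lemma tm_ne (m : ℕ) : thueMorse (2 * m) ≠ thueMorse (2 * m + 1) := by
  rw [tm_even, tm_odd]; cases thueMorse m <;> simp

lemma tm_pow_add : ∀ n j : ℕ, j < 2 ^ n → thueMorse (2 ^ n + j) = !thueMorse j := by
  intro n
  induction n with
  | zero =>
    intro j hj
    interval_cases j
    have := tm_odd 0
    simpa using this
  | succ n ih =>
    intro j hj
    rcases Nat.even_or_odd j with ⟨u, hu⟩ | ⟨u, hu⟩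
    · have hu' : j = 2 * u := by omega
      have h1 : 2 ^ (n+1) + j = 2 * (2 ^ n + u) := by rw [hu']; ring
      rw [h1, tm_even, hu', tm_even, ih u (by rw [pow_succ] at hj; omega)]
    · have h1 : 2 ^ (n+1) + j = 2 * (2 ^ n + u) + 1 := by rw [hu]; ring
      rw [h1, tm_odd, hu, tm_odd, ih u (by rw [pow_succ] at hj; omega)]

lemma no_overlap (p : ℕ) : 0 < p → ∀ i : ℕ,
    ¬ (∀ j, j ≤ p → thueMorse (i + j) = thueMorse (i + j + p)) := by
  induction p using Nat.strong_induction_on with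
  | _ p ih =>
    intro hp i H
    rcases Nat.even_or_odd p with ⟨q, hqe⟩ | ⟨q, hq⟩
    · -- p even
      have hq' : p = 2 * q := by omega
      have hq1 : 0 < q := by omega
      apply ih q (by omega) hq1 (i / 2)
      intro j hj
      set m := i / 2 + j with hm
      by_cases hc : i ≤ 2 * m
      · have h := H (2 * m - i) (by omega)
        have e1 : i + (2 * m - i) = 2 * m := by omega
        have e2 : 2 * m + p = 2 * (m + q) := by omega
        rw [e1, e2, tm_even, tm_even] at h
        exact h
      · have h := H 0 (by omega)
        have e1 : i + 0 = 2 * m + 1 := by omega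
        have e2 : 2 * m + 1 + p = 2 * (m + q) + 1 := by omega
        rw [e1, e2, tm_odd, tm_odd] at h
        simpa using h
    · -- p odd
      have key : ∀ m : ℕ, i ≤ 2 * m + 1 → 2 * m + 2 ≤ i + 2 * p →
          thueMorse m = thueMorse (m + 1) := by
        intro m h1 h2
        by_cases hc : 2 * m + 2 ≤ i + p
        · have hA := H (2 * m + 1 - i) (by omega)
          have hB := H (2 * m + 2 - i) (by omega)
          have eA1 : i + (2 * m + 1 - i) = 2 * m + 1 := by omega
          have eA2 : 2 * m + 1 + p = 2 * (m + q + 1) := by omega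
          have eB1 : i + (2 * m + 2 - i) = 2 * (m + 1) := by omega
          have eB2 : 2 * (m + 1) + p = 2 * (m + q + 1) + 1 := by omega
          rw [eA1, eA2, tm_odd, tm_even] at hA
          rw [eB1, eB2, tm_even, tm_odd] at hB
          rw [hB, ← hA, Bool.not_not]
        · have hA := H (2 * m + 1 - p - i) (by omega)
          have hB := H (2 * m + 2 - p - i) (by omega)
          have eA1 : i + (2 * m + 1 - p - i) = 2 * (m - q) := by omega
          have eA2 : 2 * (m - q) + p = 2 * m + 1 := by omega
          have eB1 : i + (2 * m + 2 - p - i) = 2 * (m - q) + 1 := by omega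
          have eB2 : 2 * (m - q) + 1 + p = 2 * (m + 1) := by omega
          rw [eA1, eA2, tm_even, tm_odd] at hA
          rw [eB1, eB2, tm_odd, tm_even] at hB
          rw [← hB, hA, Bool.not_not]
      by_cases hp1 : p = 1
      · subst hp1
        rcases Nat.even_or_odd i with ⟨u, hu⟩ | ⟨u, hu⟩
        · have h := H 0 (by omega)
          have e1 : i + 0 = 2 * u := by omega
          rw [e1] at h
          exact tm_ne u h
        · have h := H 1 (by omega)
          have e1 : i + 1 = 2 * (u + 1) := by omega
          rw [e1] at h
          exact tm_ne (u + 1) h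
      · have hp3 : 3 ≤ p := by omega
        rcases Nat.even_or_odd (i / 2) with ⟨u, hu⟩ | ⟨u, hu⟩
        · have h := key (i / 2) (by omega) (by omega)
          have h2 : i / 2 = 2 * u := by omega
          rw [h2] at h
          exact tm_ne u h
        · have h := key (i / 2 + 1) (by omega) (by omega)
          have h2 : i / 2 + 1 = 2 * (u + 1) := by omega
          rw [h2] at h
          exact tm_ne (u + 1) h

lemma tmBlock_length (n : ℕ) (b : Bool) : (tmBlock n b).length = 2 ^ n := by
  induction n generalizing b with
  | zero => rfl
  | succ n ih => simp [tmBlock, ih, pow_succ]; ring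

lemma tm_zero : thueMorse 0 = false := by simp [thueMorse]

lemma tmBlock_getD (n : ℕ) (b : Bool) (k : ℕ) (h : k < 2 ^ n) :
    (tmBlock n b).getD k false = xor b (thueMorse k) := by
  induction n generalizing b k with
  | zero =>
    interval_cases k
    simp [tmBlock, tm_zero]
  | succ n ih =>
    show (tmBlock n b ++ tmBlock n (!b)).getD k false = _
    by_cases hk : k < 2 ^ n
    · rw [List.getD_append _ _ _ _ (by rw [tmBlock_length]; exact hk)]
      exact ih b k hk
    · push_neg at hk
      rw [List.getD_append_right _ _ _ _ (by rw [tmBlock_length]; exact hk)]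
      rw [tmBlock_length]
      have hj : k - 2 ^ n < 2 ^ n := by rw [pow_succ] at h; omega
      rw [ih (!b) _ hj]
      have : thueMorse k = !thueMorse (k - 2 ^ n) := by
        have := tm_pow_add n (k - 2 ^ n) hj
        rw [(by omega : 2 ^ n + (k - 2 ^ n) = k)] at this
        exact this
      rw [this]
      cases b <;> cases thueMorse (k - 2 ^ n) <;> rfl

lemma tm_prefix (n k : ℕ) (hk : k < 3 * 2 ^ n) :
    (tmBlock n false ++ tmBlock n true ++ tmBlock n true).getD k false = thueMorse k := by
  have hlAB : (tmBlock n false ++ tmBlock n true).length = 2 ^ n + 2 ^ n := by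
    simp [tmBlock_length]
  by_cases h1 : k < 2 ^ n
  · rw [List.getD_append _ _ _ _ (by rw [hlAB]; omega)]
    rw [List.getD_append _ _ _ _ (by rw [tmBlock_length]; exact h1)]
    rw [tmBlock_getD n false k h1]
    simp
  · push_neg at h1
    by_cases h2 : k < 2 ^ n + 2 ^ n
    · rw [List.getD_append _ _ _ _ (by rw [hlAB]; omega)]
      rw [List.getD_append_right _ _ _ _ (by rw [tmBlock_length]; exact h1)]
      rw [tmBlock_length]
      have hj : k - 2 ^ n < 2 ^ n := by omega
      rw [tmBlock_getD n true _ hj]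
      have := tm_pow_add n (k - 2 ^ n) hj
      rw [(by omega : 2 ^ n + (k - 2 ^ n) = k)] at this
      rw [this]
      cases thueMorse (k - 2 ^ n) <;> rfl
    · push_neg at h2
      rw [List.getD_append_right _ _ _ _ (by rw [hlAB]; omega)]
      rw [hlAB]
      have hj : k - (2 ^ n + 2 ^ n) < 2 ^ n := by omega
      rw [tmBlock_getD n true _ hj]
      have hj2 : k - (2 ^ n + 2 ^ n) < 2 ^ (n + 1) := by rw [pow_succ]; omega
      have := tm_pow_add (n + 1) (k - (2 ^ n + 2 ^ n)) hj2
      rw [(by rw [pow_succ]; omega : 2 ^ (n + 1) + (k - (2 ^ n + 2 ^ n)) = k)] at this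
      rw [this]
      cases thueMorse (k - (2 ^ n + 2 ^ n)) <;> rfl

lemma dio_three_halves : DioCond thueMorse (3 / 2 : ℝ) := by
  refine ⟨fun n => (2 : ℤ) ^ n - 1, fun n => (2 : ℤ) ^ (n + 1) - 1,
    fun n => 3 * (2 : ℤ) ^ n - 1, ?_, ?_, ?_, ?_⟩
  · intro n
    dsimp only
    have h1 : (0 : ℤ) < 2 ^ n := by positivity
    have h2 : (2 : ℤ) ^ (n + 1) = 2 * 2 ^ n := by ring
    refine ⟨by omega, by omega, by omega⟩
  · intro n i hi1 hi2
    dsimp only at hi2 ⊢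
    have c1 : ((2 ^ n : ℕ) : ℤ) = 2 ^ n := by push_cast; ring
    have c2 : ((2 ^ (n + 1) : ℕ) : ℤ) = 2 ^ (n + 1) := by push_cast; ring
    have c3 : (2 : ℤ) ^ (n + 1) = 2 * 2 ^ n := by ring
    have c4 : (2 : ℕ) ^ (n + 1) = 2 ^ n + 2 ^ n := by rw [pow_succ]; ring
    have hi2' : i ≤ 2 ^ n := by omega
    set j : ℕ := (i - 1).toNat with hj
    have hjlt : j < 2 ^ n := by omega
    have e1 : ((2 : ℤ) ^ n - 1 + i).toNat = 2 ^ n + j := by omega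
    have e2 : ((2 : ℤ) ^ (n + 1) - 1 + i).toNat = 2 ^ (n + 1) + j := by omega
    rw [e1, e2, tm_pow_add n j hjlt, tm_pow_add (n + 1) j (by omega)]
  · intro n
    push_cast
    have h : (2 : ℝ) ^ (n + 1) = 2 * 2 ^ n := by ring
    rw [h]
    have h1 : (0 : ℝ) < 2 ^ n := by positivity
    linarith
  · apply tendsto_atTop_mono (f := fun n : ℕ => (n : ℤ))
    · intro n
      have h : (n : ℤ) < 2 ^ n := by exact_mod_cast Nat.lt_two_pow_self
      have h2 : (2 : ℤ) ^ (n + 1) = 2 * 2 ^ n := by ring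
      simp only
      omega
    · exact tendsto_natCast_atTop_atTop

lemma dio_bdd : BddAbove {ρ : ℝ | 1 ≤ ρ ∧ DioCond thueMorse ρ} := by
  refine ⟨3, ?_⟩
  rintro ρ ⟨h1, r, s, t', hrng, hrep, hrho, htend⟩
  obtain ⟨n, hn⟩ := (htend.eventually_ge_atTop 2).exists
  obtain ⟨hr1, hr2, hr3⟩ := hrng n
  have hs1 : 1 ≤ s n := by omega
  have hub : t' n ≤ 2 * s n - r n := by
    by_contra hcon
    push_neg at hcon
    set p := (s n - r n).toNat with hp
    have hp1 : 0 < p := by omega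
    apply no_overlap p hp1 (r n + 1).toNat
    intro j hj
    have h := hrep n ((j : ℤ) + 1) (by omega) (by omega)
    have e1 : (r n + ((j : ℤ) + 1)).toNat = (r n + 1).toNat + j := by omega
    have e2 : (s n + ((j : ℤ) + 1)).toNat = (r n + 1).toNat + j + p := by omega
    rw [e1, e2] at h
    exact h
  have ht3 : t' n ≤ 3 * s n := by omega
  have hcast : ((t' n : ℤ) : ℝ) ≤ 3 * ((s n : ℤ) : ℝ) := by exact_mod_cast ht3
  have hspos : (0 : ℝ) < ((s n : ℤ) : ℝ) := by exact_mod_cast hs1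
  have := le_trans (hrho n) hcast
  exact (mul_le_mul_iff_of_pos_right hspos).mp this

/-- For the Thue–Morse word `t`, for every `n` the word `U_n V_n V_n` is a prefix of `t`,
where `U_n = τ^n(0)` and `V_n = τ^n(1)` each have length `2^n`; consequently the Diophantine
exponent of `t` is at least `3/2`. -/
theorem stmt_12 :
    (∀ n k : ℕ, k < 3 * 2 ^ n →
      (tmBlock n false ++ tmBlock n true ++ tmBlock n true).getD k false = thueMorse k) ∧
    (3 / 2 : ℝ) ≤ sSup {ρ : ℝ | 1 ≤ ρ ∧ DioCond thueMorse ρ} := by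
  constructor
  · exact tm_prefix
  · exact le_csSup dio_bdd ⟨by norm_num, dio_three_halves⟩
end

section
/- Every lacunary sequence has infinite refined Diophantine exponent. Concretely: let b be a letter and (u_n) a strictly increasing sequence of non-negative integers with liminf u_{n+1}/u_n > 1, and let a be the word with a_i ≠ b exactly when i = u_n for some n. Then for every ρ ≥ 1 and every ε > 0 there exist sequences r_n < s_n < t_n with t_n ≥ ρ s_n, s_n - r_n → ∞, and a fixed δ such that the words a[r_n+1, r_n+t_n-s_n] and a[s_n+1, t_n] differ in at most δ positions. -/
/-!
Since `liminf u (n+1) / u n > 1`, from some index `N` on the sequence grows at least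
geometrically, `c * u n ≤ u (n+1)` with `c > 1`. Fix `j` with `ρ ≤ c ^ j` and take
`r = u m`, `s = u (m+1)`, `t = u (m+1+j)` with `m = n + N`. Then `t ≥ c ^ j s ≥ ρ s` and
`s - r ≥ (c - 1) u m → ∞`. Outside the lacunary positions both words are constantly `b`, and
each of the two windows `(r, r + t - s]` and `(s, t]` meets at most `j` of the `u`'s, so the
words differ in at most `2 j` positions.
-/

open Filter Finset

lemma exists_one_lt_eventually_mul_le {u : ℕ → ℕ}
    (h : 1 < liminf (fun n => (u (n + 1) : ℝ) / u n) atTop) :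
    ∃ c : ℝ, 1 < c ∧ ∀ᶠ n in atTop, c * u n ≤ u (n + 1) := by
  set L := liminf (fun n => (u (n + 1) : ℝ) / u n) atTop
  refine ⟨(1 + L) / 2, by linarith, ?_⟩
  have hbdd : IsBoundedUnder (· ≥ ·) atTop (fun n => (u (n + 1) : ℝ) / u n) :=
    isBoundedUnder_of ⟨0, fun n => by positivity⟩
  filter_upwards [eventually_lt_of_lt_liminf (show (1 + L) / 2 < L by linarith) hbdd] with n hn
  -- a ratio above `c > 0` rules out the junk value `x / 0 = 0`
  have hpos : (0 : ℝ) < u n := by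
    rcases (Nat.cast_nonneg (u n) : (0 : ℝ) ≤ u n).eq_or_lt with h0 | h0
    · rw [← h0, div_zero] at hn; linarith
    · exact h0
  exact ((lt_div_iff₀ hpos).mp hn).le

lemma pow_mul_le_of_mul_le_succ {f : ℕ → ℝ} {c : ℝ} {N : ℕ} (hc : 0 ≤ c)
    (h : ∀ m, N ≤ m → c * f m ≤ f (m + 1)) {m : ℕ} (hm : N ≤ m) (j : ℕ) :
    c ^ j * f m ≤ f (m + j) := by
  induction j with
  | zero => simp
  | succ j ih =>
    calc c ^ (j + 1) * f m = c * (c ^ j * f m) := by ring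
      _ ≤ c * f (m + j) := mul_le_mul_of_nonneg_left ih hc
      _ ≤ f (m + (j + 1)) := h (m + j) (by omega)

lemma tendsto_sub_atTop_of_eventually_mul_le {u : ℕ → ℕ} (hu : StrictMono u) {c : ℝ}
    (hc : 1 < c) (h : ∀ᶠ n in atTop, c * u n ≤ u (n + 1)) :
    Tendsto (fun n => u (n + 1) - u n) atTop atTop := by
  rw [← tendsto_natCast_atTop_iff (R := ℝ)]
  have hu' : Tendsto (fun n => (u n : ℝ)) atTop atTop :=
    tendsto_natCast_atTop_atTop.comp hu.tendsto_atTop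
  refine tendsto_atTop_mono' atTop ?_ (hu'.const_mul_atTop (by linarith : 0 < c - 1))
  filter_upwards [h] with n hn
  rw [Nat.cast_sub (hu (Nat.lt_succ_self n)).le]
  linarith

lemma card_filter_ne_le_add {ι A : Type*} [DecidableEq ι] [DecidableEq A] (s : Finset ι) (x y : ι → A)
    (b : A) :
    (s.filter fun i => x i ≠ y i).card ≤
      (s.filter fun i => x i ≠ b).card + (s.filter fun i => y i ≠ b).card := by
  calc (s.filter fun i => x i ≠ y i).card
      ≤ (s.filter fun i => x i ≠ b ∨ y i ≠ b).card := by
        refine card_le_card (monotone_filter_right s fun i _ hxy => ?_)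
        by_contra! hb
        exact hxy (hb.1.trans hb.2.symm)
    _ ≤ _ := by rw [filter_or]; exact card_union_le _ _

lemma card_filter_ne_le_of_lt {A : Type*} [DecidableEq A] {a : ℕ → A} {b : A} {u : ℕ → ℕ}
    (hu : StrictMono u) (ha : ∀ i, a i ≠ b → ∃ n, i = u n) {p j L : ℕ}
    (hL : u p + L < u (p + j + 1)) :
    ((Icc 1 L).filter fun i => a (u p + i) ≠ b).card ≤ j := by
  calc ((Icc 1 L).filter fun i => a (u p + i) ≠ b).card
      ≤ ((Ioc p (p + j)).image fun n => u n - u p).card := by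
        refine card_le_card fun i hi => ?_
        obtain ⟨hiL, hab⟩ := mem_filter.mp hi
        obtain ⟨n, hn⟩ := ha _ hab
        rw [mem_Icc] at hiL
        have hpn : p < n := hu.lt_iff_lt.mp (by omega)
        have hnj : n < p + j + 1 := hu.lt_iff_lt.mp (by omega)
        exact mem_image.mpr ⟨n, mem_Ioc.mpr ⟨hpn, by omega⟩, by omega⟩
    _ ≤ (Ioc p (p + j)).card := card_image_le
    _ = j := by simp

theorem stmt_13_general {A : Type*} [DecidableEq A] (b : A) (u : ℕ → ℕ) (hmono : StrictMono u)
    (hliminf : 1 < Filter.liminf (fun n => (u (n + 1) : ℝ) / (u n : ℝ)) Filter.atTop)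
    (a : ℕ → A) (ha : ∀ i, a i ≠ b ↔ ∃ n, i = u n)
    (ρ : ℝ) :
    ∃ (r s t : ℕ → ℕ) (δ : ℕ),
      (∀ n, r n < s n ∧ s n < t n) ∧
      (∀ n, ρ * (s n : ℝ) ≤ (t n : ℝ)) ∧
      Filter.Tendsto (fun n => s n - r n) Filter.atTop Filter.atTop ∧
      ∀ n, ((Finset.Icc 1 (t n - s n)).filter fun i => a (r n + i) ≠ a (s n + i)).card
        ≤ δ := by
  obtain ⟨c, hc, hgrowth⟩ := exists_one_lt_eventually_mul_le hliminf
  obtain ⟨N, hN⟩ := eventually_atTop.mp hgrowth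
  obtain ⟨j, hj, hρ⟩ : ∃ j, 0 < j ∧ ρ ≤ c ^ j := by
    obtain ⟨k, hk⟩ := pow_unbounded_of_one_lt ρ hc
    exact ⟨k + 1, k.succ_pos, hk.le.trans (pow_le_pow_right₀ hc.le k.le_succ)⟩
  have ha' : ∀ i, a i ≠ b → ∃ n, i = u n := fun i => (ha i).mp
  refine ⟨fun n => u (n + N), fun n => u (n + N + 1), fun n => u (n + N + 1 + j), 2 * j,
    fun n => ⟨hmono (by omega), hmono (by omega)⟩, fun n => ?_, ?_, fun n => ?_⟩
  · calc ρ * u (n + N + 1) ≤ c ^ j * u (n + N + 1) := by gcongr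
      _ ≤ u (n + N + 1 + j) := pow_mul_le_of_mul_le_succ (by linarith) hN (by omega) j
  · exact (tendsto_add_atTop_iff_nat N).mpr
      (tendsto_sub_atTop_of_eventually_mul_le hmono hc hgrowth)
  · have hrs := hmono (by omega : n + N < n + N + 1)
    have hst := hmono (by omega : n + N + 1 < n + N + 1 + j)
    have ht : u (n + N + 1 + j) = u (n + N + j + 1) := congrArg u (by omega)
    have ht_lt := hmono (by omega : n + N + 1 + j < n + N + 1 + j + 1)
    dsimp only
    refine (card_filter_ne_le_add _ _ _ b).trans ?_
    rw [two_mul]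
    gcongr
    · exact card_filter_ne_le_of_lt hmono ha' (by omega)
    · exact card_filter_ne_le_of_lt hmono ha' (by omega)

/-- Every lacunary sequence has infinite refined Diophantine exponent: if `a i ≠ b` exactly
when `i = u n` for some `n`, where `(u n)` is strictly increasing with
`liminf u (n+1) / u n > 1`, then for every `ρ ≥ 1` and `ε > 0` there are sequences
`r n < s n < t n` with `t n ≥ ρ s n`, `s n - r n → ∞`, and a fixed `δ` such that the words
`a[r n + 1, r n + t n - s n]` and `a[s n + 1, t n]` differ in at most `δ` positions. -/
theorem stmt_13 {A : Type*} [DecidableEq A] (b : A) (u : ℕ → ℕ) (hmono : StrictMono u)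
    (hliminf : 1 < Filter.liminf (fun n => (u (n + 1) : ℝ) / (u n : ℝ)) Filter.atTop)
    (a : ℕ → A) (ha : ∀ i, a i ≠ b ↔ ∃ n, i = u n)
    (ρ : ℝ) (hρ : 1 ≤ ρ) (ε : ℝ) (hε : 0 < ε) :
    ∃ (r s t : ℕ → ℕ) (δ : ℕ),
      (∀ n, r n < s n ∧ s n < t n) ∧
      (∀ n, ρ * (s n : ℝ) ≤ (t n : ℝ)) ∧
      Filter.Tendsto (fun n => s n - r n) Filter.atTop Filter.atTop ∧
      ∀ n, ((Finset.Icc 1 (t n - s n)).filter fun i => a (r n + i) ≠ a (s n + i)).card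
        ≤ δ :=
  stmt_13_general b u hmono hliminf a ha ρ
end

section
/- Every quadratic Pisot number is of the form (p + √(p² - 4q))/2 where p and q are integers satisfying p ≥ 1, -p ≤ q ≤ p - 2, and p² - 4q is not a perfect square; conversely, every such expression defines a quadratic Pisot number. -/
open Polynomial

private lemma quad_monic (p q : ℤ) : (X ^ 2 + C (-p) * X + C q : Polynomial ℤ).Monic := by
  have h : (X ^ 2 + C (-p) * X + C q : Polynomial ℤ) = X ^ 2 + (C (-p) * X + C q) := by ring
  rw [h]
  exact monic_X_pow_add (lt_of_le_of_lt degree_linear_le (by decide))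

private lemma aeval_quad {A : Type*} [CommRing A] (p q : ℤ) (x : A) :
    Polynomial.aeval x (X ^ 2 + C (-p) * X + C q : Polynomial ℤ)
      = x ^ 2 - (p : A) * x + (q : A) := by
  simp only [map_add, map_mul, map_pow, map_neg, map_intCast, aeval_X, aeval_C,
    algebraMap_int_eq, eq_intCast, Int.cast_neg]
  ring

private lemma quad_natDegree (p q : ℤ) :
    (X ^ 2 + C (-p) * X + C q : Polynomial ℤ).natDegree = 2 := by
  have h1 : (X ^ 2 + C (-p) * X + C q : Polynomial ℤ)
      = C 1 * X ^ 2 + C (-p) * X + C q := by rw [C_1, one_mul]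
  rw [h1]; exact natDegree_quadratic one_ne_zero

private lemma quad_shape (P : Polynomial ℤ) (hm : P.Monic) (hd : P.natDegree = 2) :
    P = X ^ 2 + C (P.coeff 1) * X + C (P.coeff 0) := by
  ext n
  have h2 : P.coeff 2 = 1 := by
    have := hm.coeff_natDegree; rwa [hd] at this
  match n with
  | 0 => simp only [coeff_add, coeff_C_mul, coeff_X_pow, coeff_X, coeff_C]; norm_num
  | 1 => simp only [coeff_add, coeff_C_mul, coeff_X_pow, coeff_X, coeff_C]; norm_num
  | 2 => simp only [coeff_add, coeff_C_mul, coeff_X_pow, coeff_X, coeff_C, h2]; norm_num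
  | (n+3) =>
    rw [P.coeff_eq_zero_of_natDegree_lt (by omega)]
    simp only [coeff_add, coeff_C_mul, coeff_X_pow, coeff_X, coeff_C]
    norm_num
    omega

private lemma irred_aux (p q : ℤ) (hk : ¬∃ k : ℤ, k ^ 2 = p ^ 2 - 4 * q) :
    Irreducible (X ^ 2 + C (-p) * X + C q : Polynomial ℤ) := by
  set P : Polynomial ℤ := X ^ 2 + C (-p) * X + C q with hP
  have hm : P.Monic := quad_monic p q
  have hd : P.natDegree = 2 := quad_natDegree p q
  constructor
  · intro h
    have := natDegree_eq_zero_of_isUnit h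
    omega
  · intro f g hfg
    by_contra hcon
    push_neg at hcon
    obtain ⟨hf, hg⟩ := hcon
    have hf0 : f ≠ 0 := by rintro rfl; exact hm.ne_zero (by rw [hfg, zero_mul])
    have hg0 : g ≠ 0 := by rintro rfl; exact hm.ne_zero (by rw [hfg, mul_zero])
    have hsum : f.natDegree + g.natDegree = 2 := by
      rw [← natDegree_mul hf0 hg0, ← hfg, hd]
    have hlc : f.leadingCoeff * g.leadingCoeff = 1 := by
      rw [← leadingCoeff_mul, ← hfg]; exact hm
    have huf : IsUnit f.leadingCoeff := IsUnit.of_mul_eq_one _ hlc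
    have hug : IsUnit g.leadingCoeff :=
      IsUnit.of_mul_eq_one _ (by rw [mul_comm] at hlc; exact hlc)
    have hfd : f.natDegree ≠ 0 := by
      intro h0
      apply hf
      rw [eq_C_of_natDegree_eq_zero h0]
      apply isUnit_C.mpr
      have : f.coeff 0 = f.leadingCoeff := by rw [leadingCoeff, h0]
      rw [this]; exact huf
    have hgd : g.natDegree ≠ 0 := by
      intro h0
      apply hg
      rw [eq_C_of_natDegree_eq_zero h0]
      apply isUnit_C.mpr
      have : g.coeff 0 = g.leadingCoeff := by rw [leadingCoeff, h0]
      rw [this]; exact hug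
    have hfd1 : f.natDegree = 1 := by omega
    obtain ⟨a, ha0, b, hab⟩ := natDegree_eq_one.mp hfd1
    have hla : f.leadingCoeff = a := by
      rw [← hab, leadingCoeff, natDegree_eq_one.mpr ⟨a, ha0, b, rfl⟩]
      simp only [coeff_add, coeff_C_mul, coeff_X, coeff_C]
      norm_num
    have ha : a = 1 ∨ a = -1 := Int.isUnit_iff.mp (hla ▸ huf)
    have ha2 : a * a = 1 := by rcases ha with rfl | rfl <;> norm_num
    set x₀ : ℤ := -(a * b) with hx₀
    have hfe : Polynomial.aeval x₀ f = 0 := by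
      rw [← hab]
      simp only [map_add, map_mul, map_intCast, aeval_X, aeval_C, algebraMap_int_eq,
        eq_intCast, Int.cast_id]
      rw [hx₀]
      linear_combination (-b) * ha2
    have hre : x₀ ^ 2 - p * x₀ + q = 0 := by
      have h1 : Polynomial.aeval x₀ P = 0 := by rw [hfg, map_mul, hfe, zero_mul]
      rw [hP, aeval_quad] at h1
      simpa using h1
    exact hk ⟨2 * x₀ - p, by linear_combination 4 * hre⟩

private lemma not_sq_aux (p q : ℤ)
    (h : Irreducible (X ^ 2 + C (-p) * X + C q : Polynomial ℤ)) :
    ¬∃ k : ℤ, k ^ 2 = p ^ 2 - 4 * q := by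
  rintro ⟨k, hk⟩
  have h4 : (p - k) * (p + k) = 4 * q := by linear_combination -hk
  have hev : Even (p + k) := by
    by_contra hodd
    rw [Int.not_even_iff_odd] at hodd
    have hodd2 : Odd (p - k) := by
      have : p - k = (p + k) - 2 * k := by ring
      rw [this]; exact hodd.sub_even (even_two_mul k)
    have : Odd ((p - k) * (p + k)) := hodd2.mul hodd
    rw [h4] at this
    obtain ⟨m, hm⟩ := this; omega
  obtain ⟨a, ha⟩ := hev
  have hk' : k = 2 * a - p := by omega
  subst hk'
  have hroot : a ^ 2 - p * a + q = 0 := by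
    have h0 : (4 : ℤ) * (a ^ 2 - p * a + q) = 0 := by linear_combination hk
    rcases mul_eq_zero.mp h0 with h | h
    · norm_num at h
    · exact h
  have hfac : (X ^ 2 + C (-p) * X + C q : Polynomial ℤ)
      = (X - C a) * (X - C (p - a)) := by
    have e1 : (X - C a) * (X - C (p - a))
        = X ^ 2 + C (-p) * X + C (a * (p - a)) := by
      simp only [C_neg, C_mul, C_sub]; ring
    rw [e1, show a * (p - a) = q from by linear_combination -hroot]
  rcases h.isUnit_or_isUnit hfac with hu | hu
  · exact Polynomial.not_isUnit_X_sub_C a hu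
  · exact Polynomial.not_isUnit_X_sub_C (p - a) hu

/-- Characterization of quadratic Pisot numbers: a real number `β` is a quadratic Pisot
number (a root of a monic irreducible quadratic integer polynomial, `β > 1`, with all other
conjugates of modulus `< 1`) if and only if `β = (p + √(p² - 4q)) / 2` for integers `p, q`
with `p ≥ 1`, `-p ≤ q ≤ p - 2`, and `p² - 4q` not a perfect square. -/
theorem stmt_16 (β : ℝ) :
    (∃ P : Polynomial ℤ, P.Monic ∧ P.natDegree = 2 ∧ Irreducible P ∧
        Polynomial.aeval β P = 0 ∧ 1 < β ∧
        ∀ z : ℂ, Polynomial.aeval z P = 0 → z ≠ (β : ℂ) → ‖z‖ < 1) ↔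
      ∃ p q : ℤ, 1 ≤ p ∧ -p ≤ q ∧ q ≤ p - 2 ∧ (¬∃ k : ℤ, k ^ 2 = p ^ 2 - 4 * q) ∧
        β = ((p : ℝ) + Real.sqrt ((p : ℝ) ^ 2 - 4 * (q : ℝ))) / 2 := by
  constructor
  · rintro ⟨P, hm, hd, hirr, hroot, hβ1, hconj⟩
    set p : ℤ := -(P.coeff 1) with hpdef
    set q : ℤ := P.coeff 0 with hqdef
    have hP2 : P = X ^ 2 + C (-p) * X + C q := by
      rw [quad_shape P hm hd]; simp [hpdef, hqdef]
    have hnsq : ¬∃ k : ℤ, k ^ 2 = p ^ 2 - 4 * q := not_sq_aux p q (hP2 ▸ hirr)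
    have hrootR : β ^ 2 - (p : ℝ) * β + (q : ℝ) = 0 := by
      rw [hP2, aeval_quad] at hroot; exact hroot
    have hq' : (q : ℝ) = β * ((p : ℝ) - β) := by linear_combination hrootR
    have key : ∀ z : ℂ, Polynomial.aeval z P
        = (z - (β : ℂ)) * (z - (((p : ℝ) - β : ℝ) : ℂ)) := by
      intro z
      rw [hP2, aeval_quad]
      have e2 : ((q : ℤ) : ℂ) = (β : ℂ) * ((((p : ℝ) - β : ℝ)) : ℂ) := by
        rw [show ((q : ℤ) : ℂ) = ((q : ℝ) : ℂ) from by push_cast; ring, hq']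
        push_cast; ring
      rw [e2]
      push_cast
      ring
    have hne : ((p : ℝ) - β) ≠ β := by
      intro h
      apply hnsq
      refine ⟨0, ?_⟩
      have hr : ((p : ℝ)) ^ 2 - 4 * (q : ℝ) = 0 := by
        linear_combination ((p : ℝ) - 2 * β) * h - 4 * hrootR
      have : ((p ^ 2 - 4 * q : ℤ) : ℝ) = 0 := by push_cast; linarith
      exact_mod_cast this.symm
    have habs : |(p : ℝ) - β| < 1 := by
      have hz : Polynomial.aeval ((((p : ℝ) - β : ℝ)) : ℂ) P = 0 := by rw [key]; ring
      have hnez : ((((p : ℝ) - β : ℝ)) : ℂ) ≠ (β : ℂ) := by exact_mod_cast hne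
      have := hconj _ hz hnez
      rwa [Complex.norm_real, Real.norm_eq_abs] at this
    obtain ⟨hb1, hb2⟩ := abs_lt.mp habs
    refine ⟨p, q, ?_, ?_, ?_, hnsq, ?_⟩
    · have h0 : (0 : ℝ) < (p : ℝ) := by linarith
      have : (0 : ℤ) < p := by exact_mod_cast h0
      omega
    · have h1 : (-(p : ℝ) - 1 : ℝ) < (q : ℝ) := by nlinarith [hq']
      have h2 : (-p - 1 : ℤ) < q := by
        have h3 : ((-p - 1 : ℤ) : ℝ) < ((q : ℤ) : ℝ) := by push_cast; linarith
        exact_mod_cast h3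
      omega
    · have h1 : (q : ℝ) < (p : ℝ) - 1 := by nlinarith [hq']
      have h2 : q < p - 1 := by
        have h3 : ((q : ℤ) : ℝ) < ((p - 1 : ℤ) : ℝ) := by push_cast; linarith
        exact_mod_cast h3
      omega
    · have hD : (p : ℝ) ^ 2 - 4 * (q : ℝ) = (2 * β - (p : ℝ)) ^ 2 := by
        linear_combination -4 * hrootR
      have hge : (0 : ℝ) ≤ 2 * β - (p : ℝ) := by linarith
      rw [hD, Real.sqrt_sq hge]; ring
  · rintro ⟨p, q, hp, hq1, hq2, hnsq, hβeq⟩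
    have hpR : (1 : ℝ) ≤ (p : ℝ) := by exact_mod_cast hp
    have hq1R : (-(p : ℝ)) ≤ (q : ℝ) := by exact_mod_cast hq1
    have hq2R : (q : ℝ) ≤ (p : ℝ) - 2 := by
      have : ((q : ℤ) : ℝ) ≤ ((p - 2 : ℤ) : ℝ) := by exact_mod_cast hq2
      push_cast at this; linarith
    set D : ℝ := (p : ℝ) ^ 2 - 4 * (q : ℝ) with hDdef
    set s : ℝ := Real.sqrt D with hsdef
    have hDge : ((p : ℝ) - 2) ^ 2 + 4 ≤ D := by rw [hDdef]; nlinarith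
    have hDgt : ((p : ℝ) - 2) ^ 2 < D := by linarith
    have hDlt : D < ((p : ℝ) + 2) ^ 2 := by rw [hDdef]; nlinarith
    have hD0 : (0 : ℝ) ≤ D := by nlinarith [sq_nonneg ((p : ℝ) - 2)]
    have hs2 : s ^ 2 = D := Real.sq_sqrt hD0
    have hs0 : (0 : ℝ) ≤ s := Real.sqrt_nonneg _
    have hs2' : s ^ 2 = (p : ℝ) ^ 2 - 4 * (q : ℝ) := by rw [hs2]
    have hs_ge2 : (2 : ℝ) ≤ s := by nlinarith [sq_nonneg ((p : ℝ) - 2)]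
    have hs_gt : (p : ℝ) - 2 < s := by nlinarith
    have hs_lt : s < (p : ℝ) + 2 := by nlinarith
    have hβval : β = ((p : ℝ) + s) / 2 := hβeq
    set β' : ℝ := ((p : ℝ) - s) / 2 with hβ'def
    have hβ'lt : β' < 1 := by rw [hβ'def]; linarith
    have hβ'gt : -1 < β' := by rw [hβ'def]; linarith
    refine ⟨X ^ 2 + C (-p) * X + C q, quad_monic p q, quad_natDegree p q,
      irred_aux p q hnsq, ?_, by rw [hβval]; linarith, ?_⟩
    · rw [aeval_quad, hβval]
      field_simp
      linarith [hs2']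
    · intro z hz hne
      have hqr : (q : ℝ) = (((p : ℝ) + s) / 2) * β' := by
        rw [hβ'def]; field_simp; linarith [hs2']
      rw [aeval_quad] at hz
      have hfac : (z - ((((p : ℝ) + s) / 2 : ℝ) : ℂ)) * (z - (β' : ℂ)) = 0 := by
        have e2 : ((q : ℤ) : ℂ) = ((((p : ℝ) + s) / 2 : ℝ) : ℂ) * (β' : ℂ) := by
          rw [show ((q : ℤ) : ℂ) = ((q : ℝ) : ℂ) from by push_cast; ring, hqr]
          push_cast; ring
        have e1 : ((p : ℤ) : ℂ) = ((((p : ℝ) + s) / 2 : ℝ) : ℂ) + (β' : ℂ) := by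
          rw [hβ'def]; push_cast; ring
        rw [e1, e2] at hz
        linear_combination hz
      rcases mul_eq_zero.mp hfac with h | h
      · rw [hβval] at hne
        exact absurd (by linear_combination h) hne
      · have hzb : z = (β' : ℂ) := by linear_combination h
        rw [hzb, Complex.norm_real, Real.norm_eq_abs]
        exact abs_lt.mpr ⟨hβ'gt, hβ'lt⟩
end

section
/- Let K be a number field, v a place of K, and β ∈ K with |β|_v > 1. Suppose (u_i) is a strictly increasing sequence of non-negative integers with limsup u_{i+1}/u_i = ∞, and a_i ∈ K \ {0} with h(a_i) = o(u_i). Then ξ = Σ a_i β^{-u_i} ∈ K_v is approximated by its partial sums α_n = Σ_{i≤n} a_i β^{-u_i} ∈ K to arbitrarily high order relative to the height: for every ω > 0 there are infinitely many n with |ξ - α_n|_v ≤ H(α_n)^{-ω}. -/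
open Filter

/-- The absolute multiplicative Weil height associated with a family of normalized absolute
values indexed by the places `V` of a number field `K`. -/
noncomputable def weilHeight {K V : Type*} [Field K] (absv : V → AbsoluteValue K ℝ)
    (x : K) : ℝ :=
  ∏ᶠ v, max (absv v x) 1

section Aux

/-- If `r ^ t` grows at most linearly in `t`, then `r ≤ 1`. -/
lemma aux_pow_le_linear_imp_le_one {r B : ℝ}
    (h : ∀ t : ℕ, 1 ≤ t → r ^ t ≤ B * t) : r ≤ 1 := by
  by_contra hr1
  push_neg at hr1
  set s := r - 1 with hs
  have hs0 : 0 < s := by simp only [hs]; linarith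
  have hB : 0 ≤ B := by nlinarith [h 1 le_rfl]
  have key : ∀ t : ℕ, 1 ≤ t → (t : ℝ) * s ^ 2 ≤ 2 * B := by
    intro t ht
    have ht0 : (0:ℝ) < t := by exact_mod_cast ht
    have h1 : 1 + (t:ℝ) * s ≤ r ^ t := by
      have := one_add_mul_le_pow (a := s) (by linarith) t
      simpa [hs] using this
    have h2 : ((t:ℝ) * s) ^ 2 ≤ (r ^ t) ^ 2 := by
      have h0 : 0 ≤ (t:ℝ) * s := by positivity
      nlinarith
    have h3 : (r ^ t) ^ 2 = r ^ (2 * t) := by ring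
    have h4 : r ^ (2 * t) ≤ B * (2 * t) := by
      have := h (2 * t) (by omega)
      simpa [Nat.cast_mul] using this
    nlinarith
  obtain ⟨t, ht⟩ := exists_nat_gt (2 * B / s ^ 2)
  have ht1 : 1 ≤ t := by
    by_contra h'
    push_neg at h'
    interval_cases t
    · simp only [Nat.cast_zero] at ht
      nlinarith [div_nonneg (by linarith : (0:ℝ) ≤ 2*B) (sq_nonneg s)]
  have h5 : 2 * B < (t:ℝ) * s ^ 2 := by
    rw [div_lt_iff₀ (by positivity)] at ht
    linarith
  linarith [key t ht1]

lemma aux_one_le_prod {ι : Type*} (s : Finset ι) (f : ι → ℝ) (h : ∀ i ∈ s, 1 ≤ f i) :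
    1 ≤ ∏ i ∈ s, f i := by
  calc (1:ℝ) = ∏ _i ∈ s, 1 := by simp
  _ ≤ ∏ i ∈ s, f i := Finset.prod_le_prod (by simp) h

lemma aux_single_le_prod {ι : Type*} (s : Finset ι) (f : ι → ℝ)
    (h : ∀ i ∈ s, 1 ≤ f i) {i : ι} (hi : i ∈ s) : f i ≤ ∏ j ∈ s, f j := by
  classical
  calc f i = f i * 1 := (mul_one _).symm
  _ ≤ f i * ∏ j ∈ s.erase i, f j := by
      refine mul_le_mul_of_nonneg_left
        (aux_one_le_prod _ _ fun j hj => h j (Finset.mem_of_mem_erase hj))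
        (le_trans zero_le_one (h i hi))
  _ = ∏ j ∈ s, f j := Finset.mul_prod_erase s f hi

variable {K : Type*} [Field K]

lemma aux_abs_natCast_le (f : AbsoluteValue K ℝ) (m : ℕ) : f (m : K) ≤ m := by
  induction m with
  | zero => simp
  | succ n ih =>
    push_cast
    calc f ((n : K) + 1) ≤ f (n : K) + f 1 := f.add_le _ _
    _ ≤ n + 1 := by simp [ih]

/-- An absolute value bounded by `1` on the image of `ℕ` is non-archimedean. -/
lemma aux_nonarch (f : AbsoluteValue K ℝ) (hf : ∀ m : ℕ, f (m : K) ≤ 1) (x y : K) :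
    f (x + y) ≤ max (f x) (f y) := by
  set M := max (f x) (f y) with hM
  have hM0 : 0 ≤ M := le_trans (f.nonneg x) (le_max_left _ _)
  rcases eq_or_lt_of_le hM0 with hM0' | hM0'
  · have hx : f x = 0 := le_antisymm (le_trans (le_max_left _ _) hM0'.symm.le) (f.nonneg x)
    have hy : f y = 0 := le_antisymm (le_trans (le_max_right _ _) hM0'.symm.le) (f.nonneg y)
    rw [f.eq_zero] at hx hy
    simp [hx, hy, ← hM0']
  · have key : ∀ t : ℕ, 1 ≤ t → f (x + y) ^ t ≤ (2 * M ^ t) * t := by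
      intro t ht
      have hexp : (x + y) ^ t
          = ∑ k ∈ Finset.range (t + 1), x ^ k * y ^ (t - k) * (t.choose k : K) :=
        add_pow x y t
      have h1 : f ((x + y) ^ t) ≤ ∑ k ∈ Finset.range (t + 1), M ^ t := by
        rw [hexp]
        refine le_trans (f.sum_le _ _) (Finset.sum_le_sum ?_)
        intro k hk
        rw [Finset.mem_range] at hk
        have heq : f (x ^ k * y ^ (t - k) * (t.choose k : K))
            = f x ^ k * f y ^ (t - k) * f (t.choose k : K) := by
          rw [map_mul, map_mul, map_pow, map_pow]
        rw [heq]
        calc f x ^ k * f y ^ (t - k) * f (t.choose k : K)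
            ≤ M ^ k * M ^ (t - k) * 1 := by
              refine mul_le_mul (mul_le_mul ?_ ?_ (by positivity) (by positivity)) (hf _)
                (f.nonneg _) (by positivity)
              · exact pow_le_pow_left₀ (f.nonneg _) (le_max_left _ _) _
              · exact pow_le_pow_left₀ (f.nonneg _) (le_max_right _ _) _
        _ = M ^ t := by
              rw [mul_one, ← pow_add]
              congr 1
              omega
      rw [Finset.sum_const, Finset.card_range, nsmul_eq_mul] at h1
      rw [← map_pow]
      calc f ((x+y)^t) ≤ (t + 1 : ℕ) * M ^ t := h1
      _ ≤ (2 * M ^ t) * t := by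
        push_cast
        have : (1:ℝ) ≤ t := by exact_mod_cast ht
        nlinarith [pow_nonneg hM0 t]
    have hdiv : f (x + y) / M ≤ 1 := by
      refine aux_pow_le_linear_imp_le_one (B := 2) ?_
      intro t ht
      rw [div_pow, div_le_iff₀ (by positivity)]
      calc f (x+y) ^ t ≤ (2 * M ^ t) * t := key t ht
      _ = 2 * t * M ^ t := by ring
    rwa [div_le_one hM0'] at hdiv

/-- Ultrametric bound for finite sums. -/
lemma aux_nonarch_sum (f : AbsoluteValue K ℝ)
    (hf : ∀ x y : K, f (x + y) ≤ max (f x) (f y)) {ι : Type*} (s : Finset ι) (g : ι → K) :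
    f (∑ i ∈ s, g i) ≤ ∏ i ∈ s, max (f (g i)) 1 := by
  induction s using Finset.cons_induction with
  | empty => simp
  | cons b s hb ih =>
    rw [Finset.sum_cons, Finset.prod_cons]
    have hprod1 : 1 ≤ ∏ i ∈ s, max (f (g i)) 1 :=
      aux_one_le_prod _ _ fun i _ => le_max_right _ _
    refine le_trans (hf _ _) (max_le ?_ ?_)
    · calc f (g b) ≤ max (f (g b)) 1 := le_max_left _ _
      _ = max (f (g b)) 1 * 1 := (mul_one _).symm
      _ ≤ max (f (g b)) 1 * ∏ i ∈ s, max (f (g i)) 1 :=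
        mul_le_mul_of_nonneg_left hprod1 (le_trans zero_le_one (le_max_right _ _))
    · calc f (∑ i ∈ s, g i) ≤ ∏ i ∈ s, max (f (g i)) 1 := ih
      _ = 1 * ∏ i ∈ s, max (f (g i)) 1 := (one_mul _).symm
      _ ≤ max (f (g b)) 1 * ∏ i ∈ s, max (f (g i)) 1 :=
        mul_le_mul_of_nonneg_right (le_max_right _ _) (le_trans zero_le_one hprod1)

/-- Digit-expansion bound for absolute values with `f n ≤ 1`. -/
lemma aux_abs_log_bound (f : AbsoluteValue K ℝ) {n : ℕ} (hn : 2 ≤ n) (hfn : f (n : K) ≤ 1) :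
    ∀ m : ℕ, f (m : K) ≤ n * (Nat.log n m + 1) := by
  intro m
  induction m using Nat.strong_induction_on with
  | _ m ih =>
    rcases lt_or_ge m n with hmn | hmn
    · calc f (m : K) ≤ m := aux_abs_natCast_le f m
      _ ≤ n * (Nat.log n m + 1) := by
        have : (m:ℝ) ≤ n := by exact_mod_cast hmn.le
        nlinarith [Nat.cast_nonneg (α := ℝ) (Nat.log n m), Nat.cast_nonneg (α := ℝ) n]
    · have hm0 : 0 < m := by omega
      set q := m / n with hq
      set r := m % n with hr
      have hmqr : n * q + r = m := Nat.div_add_mod m n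
      have hqm : q < m := Nat.div_lt_self hm0 (by omega)
      have hcast : (m : K) = (n : K) * (q : K) + (r : K) := by
        rw [← hmqr]; push_cast; ring
      have hlog : Nat.log n q + 1 = Nat.log n m := by
        rw [hq, Nat.log_div_base]
        have : 1 ≤ Nat.log n m := by
          rw [Nat.one_le_iff_ne_zero, ← Nat.pos_iff_ne_zero]
          exact Nat.log_pos (by omega) hmn
        omega
      have h1 : f (m : K) ≤ f (n : K) * f (q : K) + f (r : K) := by
        rw [hcast]
        exact le_trans (f.add_le _ _) (by rw [map_mul])
      have h2 : f (q : K) ≤ n * (Nat.log n q + 1) := ih q hqm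
      have h3 : f (r : K) ≤ n := le_trans (aux_abs_natCast_le f r)
        (by exact_mod_cast (Nat.mod_lt m (by omega : 0 < n)).le)
      have hfq : 0 ≤ f (q:K) := f.nonneg _
      calc f (m : K) ≤ 1 * (n * (Nat.log n q + 1)) + n := by nlinarith [f.nonneg (n:K)]
      _ = n * ((Nat.log n q + 1 : ℕ) : ℝ) + n := by push_cast; ring
      _ = n * (Nat.log n m + 1) := by rw [hlog]; push_cast; ring

/-- Ostrowski-type lemma: if an absolute value is at most `1` at one natural number `n ≥ 2`,
it is at most `1` on all of `ℕ`. -/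
lemma aux_ostrowski (f : AbsoluteValue K ℝ) {n : ℕ} (hn : 2 ≤ n) (hfn : f (n : K) ≤ 1)
    (m : ℕ) : f (m : K) ≤ 1 := by
  rcases Nat.eq_zero_or_pos m with rfl | hm0
  · simp
  set D := Nat.log n m + 1 with hD
  refine aux_pow_le_linear_imp_le_one (B := n * D) ?_
  intro t ht
  rw [← map_pow, ← Nat.cast_pow]
  calc f ((m ^ t : ℕ) : K) ≤ n * (Nat.log n (m ^ t) + 1) := aux_abs_log_bound f hn hfn _
  _ ≤ (n * D) * t := by
    have hlt : m ^ t < n ^ (D * t) := by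
      have h1 : m < n ^ D := Nat.lt_pow_succ_log_self (by omega) m
      calc m ^ t < (n ^ D) ^ t := Nat.pow_lt_pow_left h1 (by omega)
      _ = n ^ (D * t) := by rw [← pow_mul]
    have hlog : Nat.log n (m ^ t) < D * t := Nat.log_lt_of_lt_pow (by positivity) hlt
    have hc : (Nat.log n (m ^ t) : ℝ) + 1 ≤ (D * t : ℕ) := by exact_mod_cast hlog
    calc (n:ℝ) * (Nat.log n (m ^ t) + 1) ≤ n * ((D * t : ℕ) : ℝ) := by
          have : (0:ℝ) ≤ n := by positivity
          nlinarith
    _ = (n * D) * t := by push_cast; ring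

lemma aux_charP_le_one (p : ℕ) [CharP K p] (hp : p.Prime) (f : AbsoluteValue K ℝ) (m : ℕ) :
    f (m : K) ≤ 1 := by
  haveI := Fact.mk hp
  by_cases hm : (m : K) = 0
  · simp [hm]
  · have hmz : (m : ZMod p) ≠ 0 := by
      intro h
      apply hm
      have := (ZMod.natCast_eq_zero_iff m p).1 h
      exact (CharP.cast_eq_zero_iff K p m).2 this
    have hpow : ((m : K)) ^ (p - 1) = 1 := by
      have h1 : (m : ZMod p) ^ (p - 1) = 1 := ZMod.pow_card_sub_one_eq_one hmz
      have := congrArg (ZMod.castHom dvd_rfl K) h1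
      simpa [map_pow, map_natCast] using this
    have hfpow : f (m : K) ^ (p - 1) = 1 := by
      rw [← map_pow, hpow, map_one]
    have hp1 : p - 1 ≠ 0 := by have := hp.two_le; omega
    by_contra h
    push_neg at h
    have : 1 < f (m:K) ^ (p - 1) := one_lt_pow₀ h hp1
    rw [hfpow] at this
    exact lt_irrefl _ this

lemma aux_geom_sum_le {x : ℝ} (h0 : 0 ≤ x) (h1 : x < 1) (m : ℕ) :
    ∑ k ∈ Finset.range m, x ^ k ≤ (1 - x)⁻¹ := by
  have hne : x ≠ 1 := ne_of_lt h1
  rw [geom_sum_eq hne]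
  have h2 : (0:ℝ) < 1 - x := by linarith
  have h3 : (x ^ m - 1) / (x - 1) = (1 - x ^ m) / (1 - x) := by
    rw [div_eq_div_iff (by linarith) (by linarith)]
    ring
  rw [h3, inv_eq_one_div]
  have h4 : 1 - x ^ m ≤ 1 := by
    have : 0 ≤ x ^ m := by positivity
    linarith
  gcongr

variable {V : Type*}

lemma aux_one_le_weilHeight (absv : V → AbsoluteValue K ℝ) (x : K) :
    1 ≤ weilHeight absv x := by
  unfold weilHeight
  by_cases hfin : (Function.mulSupport fun v => max (absv v x) 1).Finite
  · rw [finprod_eq_prod_of_mulSupport_subset _ (s := hfin.toFinset) (by simp)]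
    exact aux_one_le_prod _ _ fun i _ => le_max_right _ _
  · rw [finprod_of_infinite_mulSupport hfin]

lemma aux_weilHeight_pos (absv : V → AbsoluteValue K ℝ) (x : K) : 0 < weilHeight absv x :=
  lt_of_lt_of_le one_pos (aux_one_le_weilHeight absv x)

lemma aux_abs_le_weilHeight (absv : V → AbsoluteValue K ℝ)
    (hfin' : ∀ x : K, x ≠ 0 → (Function.mulSupport fun v => max (absv v x) 1).Finite)
    (v : V) (x : K) : absv v x ≤ weilHeight absv x := by
  by_cases hx : x = 0
  · subst hx
    simp only [map_zero]
    exact le_trans zero_le_one (aux_one_le_weilHeight absv 0)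
  · classical
    have hfx := hfin' x hx
    set T : Finset V := insert v hfx.toFinset with hT
    have hsub : (Function.mulSupport fun w => max (absv w x) 1) ⊆ ↑T := by
      intro w hw
      simp only [hT, Finset.coe_insert, Set.mem_insert_iff, Finset.mem_coe,
        Set.Finite.mem_toFinset]
      exact Or.inr hw
    have hHT : weilHeight absv x = ∏ w ∈ T, max (absv w x) 1 :=
      finprod_eq_prod_of_mulSupport_subset _ hsub
    rw [hHT]
    have hvT : v ∈ T := Finset.mem_insert_self _ _
    calc absv v x ≤ max (absv v x) 1 := le_max_left _ _
    _ ≤ ∏ w ∈ T, max (absv w x) 1 :=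
        aux_single_le_prod T (fun w => max (absv w x) 1) (fun i _ => le_max_right _ _) hvT

/-- The key height estimate for partial sums. -/
lemma aux_height_bound (absv : V → AbsoluteValue K ℝ)
    (hfin' : ∀ x : K, x ≠ 0 → (Function.mulSupport fun v => max (absv v x) 1).Finite)
    (β : K) (hβ0 : β ≠ 0) (a : ℕ → K) (ha0 : ∀ i, a i ≠ 0) (u : ℕ → ℕ)
    (D : Finset V) (hD : ∀ w, w ∉ D → ∀ x y : K, absv w (x + y) ≤ max (absv w x) (absv w y))
    (n : ℕ) :
    weilHeight absv (∑ i ∈ Finset.range (n + 1), a i * β⁻¹ ^ u i) ≤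
      ((n : ℝ) + 2) ^ D.card *
        ∏ i ∈ Finset.range (n + 1), (weilHeight absv (a i) * weilHeight absv β⁻¹ ^ u i) := by
  classical
  set t : ℕ → K := fun i => a i * β⁻¹ ^ u i with ht
  set α : K := ∑ i ∈ Finset.range (n + 1), t i with hα
  set G : ℕ → V → ℝ := fun i w => max (absv w (a i)) 1 * max (absv w β⁻¹) 1 ^ u i with hG
  set Q : V → ℝ := fun w => ∏ i ∈ Finset.range (n + 1), G i w with hQ
  have hG1 : ∀ i w, 1 ≤ G i w := by
    intro i w
    simp only [hG]
    have h1 : (1:ℝ) ≤ max (absv w (a i)) 1 := le_max_right _ _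
    have h2 : (1:ℝ) ≤ max (absv w β⁻¹) 1 ^ u i := one_le_pow₀ (le_max_right _ _)
    nlinarith
  have hQ1 : ∀ w, 1 ≤ Q w := fun w => aux_one_le_prod _ _ fun i _ => hG1 i w
  have htG : ∀ i w, absv w (t i) ≤ G i w := by
    intro i w
    rw [ht]
    simp only [map_mul, map_pow]
    refine mul_le_mul (le_max_left _ _) (pow_le_pow_left₀ ((absv w).nonneg _) (le_max_left _ _) _)
      (by positivity) (le_trans ((absv w).nonneg _) (le_max_left _ _))
  have htG' : ∀ i w, max (absv w (t i)) 1 ≤ G i w := fun i w =>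
    max_le (htG i w) (hG1 i w)
  have step1 : ∀ w, max (absv w α) 1 ≤ (if w ∈ D then (n : ℝ) + 2 else 1) * Q w := by
    intro w
    by_cases hw : w ∈ D
    · rw [if_pos hw]
      have h1 : absv w α ≤ ∑ i ∈ Finset.range (n + 1), absv w (t i) := (absv w).sum_le _ _
      have h2 : ∑ i ∈ Finset.range (n + 1), absv w (t i) ≤ ((n : ℝ) + 1) * Q w := by
        calc ∑ i ∈ Finset.range (n + 1), absv w (t i)
            ≤ ∑ _i ∈ Finset.range (n + 1), Q w := by
              refine Finset.sum_le_sum fun i hi => le_trans (htG i w) ?_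
              exact aux_single_le_prod _ _ (fun j _ => hG1 j w) hi
        _ = ((n : ℝ) + 1) * Q w := by
              rw [Finset.sum_const, Finset.card_range, nsmul_eq_mul]; push_cast; ring
      have hQw := hQ1 w
      refine max_le (by nlinarith) (by nlinarith)
    · rw [if_neg hw, one_mul]
      refine max_le ?_ (hQ1 w)
      calc absv w α ≤ ∏ i ∈ Finset.range (n + 1), max (absv w (t i)) 1 :=
            aux_nonarch_sum _ (hD w hw) _ _
      _ ≤ Q w := Finset.prod_le_prod (fun i _ => le_trans zero_le_one (le_max_right _ _))
            fun i _ => htG' i w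
  have hRHS1 : 1 ≤ ∏ i ∈ Finset.range (n + 1),
      (weilHeight absv (a i) * weilHeight absv β⁻¹ ^ u i) := by
    refine aux_one_le_prod _ _ fun i _ => ?_
    have h1 := aux_one_le_weilHeight absv (a i)
    have h2 : (1:ℝ) ≤ weilHeight absv β⁻¹ ^ u i := one_le_pow₀ (aux_one_le_weilHeight absv β⁻¹)
    nlinarith
  by_cases hα0 : α = 0
  · have hH1 : weilHeight absv α = 1 := by
      unfold weilHeight
      rw [hα0]
      simp only [map_zero]
      norm_num
    rw [hH1]
    have : (1:ℝ) ≤ ((n:ℝ)+2) ^ D.card :=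
      one_le_pow₀ (by linarith [Nat.cast_nonneg (α := ℝ) n])
    nlinarith
  · set T : Finset V := ((D ∪ (hfin' α hα0).toFinset) ∪
      (Finset.range (n + 1)).biUnion fun i => (hfin' (a i) (ha0 i)).toFinset) ∪
      (hfin' β⁻¹ (inv_ne_zero hβ0)).toFinset with hT
    have hsuppα : (Function.mulSupport fun w => max (absv w α) 1) ⊆ ↑T := by
      intro w hw
      have : w ∈ (hfin' α hα0).toFinset := (hfin' α hα0).mem_toFinset.2 hw
      simp only [hT, Finset.coe_union, Set.mem_union, Finset.mem_coe]
      exact Or.inl (Or.inl (Or.inr this))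
    have hsuppa : ∀ i ∈ Finset.range (n + 1),
        (Function.mulSupport fun w => max (absv w (a i)) 1) ⊆ ↑T := by
      intro i hi w hw
      have : w ∈ (hfin' (a i) (ha0 i)).toFinset := (hfin' (a i) (ha0 i)).mem_toFinset.2 hw
      simp only [hT, Finset.coe_union, Set.mem_union, Finset.mem_coe]
      exact Or.inl (Or.inr (Finset.mem_biUnion.2 ⟨i, hi, this⟩))
    have hsuppβ : (Function.mulSupport fun w => max (absv w β⁻¹) 1) ⊆ ↑T := by
      intro w hw
      have : w ∈ (hfin' β⁻¹ (inv_ne_zero hβ0)).toFinset :=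
        (hfin' β⁻¹ (inv_ne_zero hβ0)).mem_toFinset.2 hw
      simp only [hT, Finset.coe_union, Set.mem_union, Finset.mem_coe]
      exact Or.inr this
    have hHα : weilHeight absv α = ∏ w ∈ T, max (absv w α) 1 :=
      finprod_eq_prod_of_mulSupport_subset _ hsuppα
    have hq : (∏ w ∈ T, Q w) = ∏ i ∈ Finset.range (n + 1),
        (weilHeight absv (a i) * weilHeight absv β⁻¹ ^ u i) := by
      rw [hQ]
      rw [Finset.prod_comm]
      refine Finset.prod_congr rfl fun i hi => ?_
      rw [hG]
      rw [Finset.prod_mul_distrib, Finset.prod_pow]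
      congr 1
      · exact (finprod_eq_prod_of_mulSupport_subset _ (hsuppa i hi)).symm
      · congr 1
        exact (finprod_eq_prod_of_mulSupport_subset _ hsuppβ).symm
    calc weilHeight absv α = ∏ w ∈ T, max (absv w α) 1 := hHα
    _ ≤ ∏ w ∈ T, ((if w ∈ D then (n : ℝ) + 2 else 1) * Q w) :=
        Finset.prod_le_prod (fun w _ => le_trans zero_le_one (le_max_right _ _))
          fun w _ => step1 w
    _ = (∏ w ∈ T, if w ∈ D then (n : ℝ) + 2 else 1) * ∏ w ∈ T, Q w :=
        Finset.prod_mul_distrib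
    _ ≤ ((n : ℝ) + 2) ^ D.card *
        ∏ i ∈ Finset.range (n + 1), (weilHeight absv (a i) * weilHeight absv β⁻¹ ^ u i) := by
      have hc : (∏ w ∈ T, if w ∈ D then (n : ℝ) + 2 else 1) ≤ ((n : ℝ) + 2) ^ D.card := by
        rw [Finset.prod_ite_mem T D fun _ => (n : ℝ) + 2, Finset.prod_const]
        exact pow_le_pow_right₀ (by linarith [Nat.cast_nonneg (α := ℝ) n])
          (Finset.card_le_card Finset.inter_subset_right)
      have hpos : (0:ℝ) ≤ ∏ i ∈ Finset.range (n + 1),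
          (weilHeight absv (a i) * weilHeight absv β⁻¹ ^ u i) := le_trans zero_le_one hRHS1
      rw [hq]
      exact mul_le_mul_of_nonneg_right hc hpos

end Aux

set_option maxHeartbeats 1000000 in
/-- Lacunary series with `limsup u (i+1) / u i = ∞` are approximated by their partial sums to
arbitrarily high order relative to the height: if `K` is a number field (normalized absolute
values satisfying the product formula), `v` a place realized by an embedding `ι` of `K` into
the completion `F = K_v`, `β ∈ K` with `|β|_v > 1`, `(u i)` strictly increasing (lacunary,
`liminf u (i+1)/u i > 1`) with `limsup u (i+1) / u i = ∞`, and `a i ∈ K ∖ {0}` with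
`h(a i) = o(u i)`, then for `ξ = ∑ a_i β^{-u_i} ∈ K_v` and the partial sums
`α n = ∑_{i ≤ n} a_i β^{-u_i} ∈ K`: for every `ω > 0` there are infinitely many `n` with
`|ξ - α n|_v ≤ H(α n)^{-ω}`. -/
theorem stmt_18 {K : Type*} [Field K] {V : Type*} (absv : V → AbsoluteValue K ℝ)
    (hfin : ∀ x : K, x ≠ 0 → (Function.mulSupport fun v => absv v x).Finite)
    (hfin' : ∀ x : K, x ≠ 0 → (Function.mulSupport fun v => max (absv v x) 1).Finite)
    (hprod : ∀ x : K, x ≠ 0 → ∏ᶠ v, absv v x = 1)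
    (v : V) {F : Type*} [NormedField F] [CompleteSpace F]
    (ι : K →+* F) (hι : ∀ x : K, ‖ι x‖ = absv v x)
    (β : K) (hβ : 1 < absv v β)
    (u : ℕ → ℕ) (hu : StrictMono u)
    (hliminf : 1 < Filter.liminf (fun i => (u (i + 1) : ℝ) / (u i : ℝ)) Filter.atTop)
    (hlimsup : ∀ C : ℝ, ∃ᶠ i in Filter.atTop, C * (u i : ℝ) < (u (i + 1) : ℝ))
    (a : ℕ → K) (ha0 : ∀ i, a i ≠ 0)
    (hht : (fun i => Real.log (weilHeight absv (a i))) =o[Filter.atTop]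
      fun i => (u i : ℝ)) :
    ∀ ω : ℝ, 0 < ω → ∀ N : ℕ, ∃ n, N ≤ n ∧
      ‖(∑' i : ℕ, ι (a i) * (ι β)⁻¹ ^ u i) -
          ι (∑ i ∈ Finset.range (n + 1), a i * β⁻¹ ^ u i)‖ ≤
        weilHeight absv (∑ i ∈ Finset.range (n + 1), a i * β⁻¹ ^ u i) ^ (-ω) := by
  classical
  intro ω hω N
  have hβ0 : β ≠ 0 := by
    intro h
    rw [h, map_zero] at hβ
    linarith
  have hβpos : (0:ℝ) < absv v β := lt_trans one_pos hβ
  set lam := Real.log (absv v β) with hlam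
  have hlam0 : 0 < lam := Real.log_pos hβ
  set r := Real.exp (-(lam / 2)) with hrdef
  have hr0 : 0 < r := Real.exp_pos _
  have hr1 : r < 1 := by
    rw [hrdef, Real.exp_lt_one_iff]
    linarith
  set c : ℕ → F := fun i => ι (a i) * (ι β)⁻¹ ^ u i with hc
  have hnormc : ∀ i, ‖c i‖ = absv v (a i) * ((absv v β)⁻¹) ^ u i := by
    intro i
    rw [hc]
    simp only [norm_mul, norm_pow, norm_inv, hι]
  have habsH : ∀ x, absv v x ≤ weilHeight absv x := aux_abs_le_weilHeight absv hfin' v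
  have hHpos : ∀ x : K, 0 < weilHeight absv x := aux_weilHeight_pos absv
  set h : ℕ → ℝ := fun i => Real.log (weilHeight absv (a i)) with hhdef
  have hh0 : ∀ i, 0 ≤ h i := fun i => Real.log_nonneg (aux_one_le_weilHeight absv _)
  -- tail estimates
  obtain ⟨I₀, hI₀⟩ : ∃ I, ∀ i, I ≤ i → h i ≤ lam / 2 * u i := by
    have hev := hht.def (half_pos hlam0)
    rw [eventually_atTop] at hev
    obtain ⟨I, hI⟩ := hev
    refine ⟨I, fun i hi => ?_⟩
    have := hI i hi
    rw [Real.norm_eq_abs, Real.norm_eq_abs, abs_of_nonneg (hh0 i),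
      abs_of_nonneg (by positivity : (0:ℝ) ≤ (u i : ℝ))] at this
    exact this
  have hkey : ∀ i, I₀ ≤ i → ‖c i‖ ≤ r ^ u i := by
    intro i hi
    rw [hnormc i]
    have hb : (absv v β)⁻¹ = Real.exp (-lam) := by
      rw [Real.exp_neg, hlam, Real.exp_log hβpos]
    have h1 : absv v (a i) ≤ Real.exp (h i) := by
      rw [hhdef]
      simp only
      rw [Real.exp_log (hHpos _)]
      exact habsH _
    calc absv v (a i) * ((absv v β)⁻¹) ^ u i
        ≤ Real.exp (h i) * Real.exp (-lam) ^ u i := by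
          refine mul_le_mul h1 ?_ (by positivity) (by positivity)
          rw [hb]
    _ = Real.exp (h i + (u i : ℝ) * (-lam)) := by
          rw [← Real.exp_nat_mul, ← Real.exp_add]
    _ ≤ Real.exp ((u i : ℝ) * (-(lam/2))) := by
          rw [Real.exp_le_exp]
          have := hI₀ i hi
          nlinarith
    _ = r ^ u i := by rw [hrdef, ← Real.exp_nat_mul]
  have hsum : Summable c := by
    rw [← summable_nat_add_iff I₀]
    apply Summable.of_norm_bounded (summable_geometric_of_lt_one hr0.le hr1)
    intro i
    calc ‖c (i + I₀)‖ ≤ r ^ u (i + I₀) := hkey _ (by omega)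
    _ ≤ r ^ i := by
        apply pow_le_pow_of_le_one hr0.le hr1.le
        calc i ≤ i + I₀ := by omega
        _ ≤ u (i + I₀) := hu.le_apply
  have hu_add : ∀ m k : ℕ, u m + k ≤ u (m + k) := by
    intro m k
    induction k with
    | zero => simp
    | succ k ih =>
      have h1 : u (m + k) < u (m + k + 1) := hu (by omega)
      have h2 : m + (k + 1) = m + k + 1 := by omega
      rw [h2]
      omega
  have htail : ∀ n : ℕ, I₀ ≤ n + 1 →
      ‖(∑' i : ℕ, c i) - ∑ i ∈ Finset.range (n+1), c i‖ ≤ (1 - r)⁻¹ * r ^ u (n+1) := by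
    intro n hn
    have heq : (∑' i : ℕ, c i) - ∑ i ∈ Finset.range (n+1), c i = ∑' i : ℕ, c (i + (n+1)) := by
      have haux := Summable.sum_add_tsum_nat_add (f := c) (n+1) hsum
      rw [← haux]
      ring
    rw [heq]
    have hble : ∀ i : ℕ, ‖c (i + (n+1))‖ ≤ r ^ u (n+1) * r ^ i := by
      intro i
      calc ‖c (i + (n+1))‖ ≤ r ^ u (i + (n+1)) := hkey _ (by omega)
      _ ≤ r ^ (u (n+1) + i) := by
          apply pow_le_pow_of_le_one hr0.le hr1.le
          have := hu_add (n+1) i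
          rw [Nat.add_comm i (n+1)]
          omega
      _ = r ^ u (n+1) * r ^ i := pow_add r _ _
    have hgs : Summable (fun i : ℕ => r ^ u (n+1) * r ^ i) :=
      (summable_geometric_of_lt_one hr0.le hr1).mul_left _
    have hs2 : Summable (fun i : ℕ => ‖c (i + (n+1))‖) :=
      Summable.of_nonneg_of_le (fun i => norm_nonneg _) hble hgs
    calc ‖∑' i : ℕ, c (i + (n+1))‖ ≤ ∑' i : ℕ, ‖c (i + (n+1))‖ := norm_tsum_le_tsum_norm hs2
    _ ≤ ∑' i : ℕ, r ^ u (n+1) * r ^ i := Summable.tsum_le_tsum hble hs2 hgs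
    _ = r ^ u (n+1) * (1 - r)⁻¹ := by
        rw [tsum_mul_left, tsum_geometric_of_lt_one hr0.le hr1]
    _ = (1 - r)⁻¹ * r ^ u (n+1) := mul_comm _ _
  -- the finite set of archimedean-type places
  obtain ⟨D, hD⟩ : ∃ D : Finset V,
      ∀ w, w ∉ D → ∀ x y : K, absv w (x + y) ≤ max (absv w x) (absv w y) := by
    obtain ⟨p, hp⟩ := CharP.exists K
    rcases CharP.char_is_prime_or_zero K p with hprime | hzero
    · exact ⟨∅, fun w _ x y => aux_nonarch (absv w) (aux_charP_le_one p hprime (absv w)) x y⟩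
    · subst hzero
      haveI : CharZero K := CharP.charP_to_charZero K
      refine ⟨(hfin (2:K) two_ne_zero).toFinset, fun w hw x y => ?_⟩
      apply aux_nonarch
      intro m
      have h2 : absv w (2:K) = 1 := by
        by_contra hne
        exact hw ((hfin (2:K) two_ne_zero).mem_toFinset.2 hne)
      apply aux_ostrowski (absv w) (n := 2) le_rfl ?_ m
      rw [show ((2:ℕ):K) = (2:K) by norm_num, h2]
  -- log-height bound
  set Hβi := Real.log (weilHeight absv β⁻¹) with hHβi
  have hHβi0 : 0 ≤ Hβi := Real.log_nonneg (aux_one_le_weilHeight absv _)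
  have hlogbound : ∀ n : ℕ,
      Real.log (weilHeight absv (∑ i ∈ Finset.range (n+1), a i * β⁻¹ ^ u i)) ≤
        (D.card : ℝ) * Real.log ((n:ℝ)+2) +
          ∑ i ∈ Finset.range (n+1), (h i + (u i : ℝ) * Hβi) := by
    intro n
    have hb := aux_height_bound absv hfin' β hβ0 a ha0 u D hD n
    have hprodpos : ∀ i ∈ Finset.range (n+1),
        0 < weilHeight absv (a i) * weilHeight absv β⁻¹ ^ u i :=
      fun i _ => mul_pos (hHpos _) (pow_pos (hHpos β⁻¹) _)
    have hexp : Real.log (((n:ℝ)+2)^D.card *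
        ∏ i ∈ Finset.range (n+1), (weilHeight absv (a i) * weilHeight absv β⁻¹ ^ u i))
        = (D.card:ℝ) * Real.log ((n:ℝ)+2) +
          ∑ i ∈ Finset.range (n+1), (h i + (u i:ℝ) * Hβi) := by
      rw [Real.log_mul (by positivity) (ne_of_gt (Finset.prod_pos hprodpos)), Real.log_pow,
        Real.log_prod (fun i hi => ne_of_gt (hprodpos i hi))]
      congr 1
      refine Finset.sum_congr rfl fun i _ => ?_
      rw [Real.log_mul (ne_of_gt (hHpos _)) (ne_of_gt (pow_pos (hHpos β⁻¹) _)), Real.log_pow]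
    exact le_trans (Real.log_le_log (hHpos _) hb) (le_of_eq hexp)
  -- lacunarity: eventually geometric growth
  obtain ⟨ρ, hρ1, I₁, hI₁⟩ : ∃ ρ : ℝ, 1 < ρ ∧ ∃ I, ∀ i, I ≤ i →
      ρ ≤ (u (i+1) : ℝ) / (u i : ℝ) := by
    rw [liminf_eq] at hliminf
    set S := {a : ℝ | ∀ᶠ i in atTop, a ≤ (u (i + 1) : ℝ) / (u i : ℝ)} with hS
    have hSne : S.Nonempty := by
      by_contra hne
      rw [Set.not_nonempty_iff_eq_empty] at hne
      rw [hne, Real.sSup_empty] at hliminf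
      linarith
    have hSbdd : BddAbove S := by
      by_contra hbdd
      rw [Real.sSup_of_not_bddAbove hbdd] at hliminf
      linarith
    obtain ⟨ρ, hρS, hρ1⟩ := exists_lt_of_lt_csSup hSne hliminf
    refine ⟨ρ, hρ1, ?_⟩
    rw [hS, Set.mem_setOf_eq, eventually_atTop] at hρS
    exact hρS
  have hupos : ∀ i : ℕ, 1 ≤ i → (0:ℝ) < u i := by
    intro i hi
    have : i ≤ u i := hu.le_apply
    have : 1 ≤ u i := le_trans hi this
    exact_mod_cast this
  set J := max I₁ 1 with hJ
  have hgrow : ∀ i, J ≤ i → ρ * u i ≤ u (i+1) := by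
    intro i hi
    have h1 : I₁ ≤ i := le_trans (le_max_left _ _) hi
    have h2 : (0:ℝ) < u i := hupos i (le_trans (le_max_right _ _) hi)
    have := hI₁ i h1
    rwa [le_div_iff₀ h2] at this
  have hρ0 : (0:ℝ) < ρ := lt_trans one_pos hρ1
  have hpowJ : ∀ k j, J ≤ j → ρ ^ k * u j ≤ u (j + k) := by
    intro k
    induction k with
    | zero => intro j _; simp
    | succ k ih =>
      intro j hj
      have h1 : ρ ^ k * u j ≤ u (j + k) := ih j hj
      have h2 : ρ * u (j + k) ≤ u (j + k + 1) := hgrow (j + k) (by omega)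
      calc ρ ^ (k+1) * u j = ρ * (ρ ^ k * u j) := by ring
      _ ≤ ρ * u (j + k) := by nlinarith [pow_pos hρ0 k, (u j).cast_nonneg (α := ℝ)]
      _ ≤ u (j + k + 1) := h2
      -- note j + (k+1) = j + k + 1
  set Kc := (1 - ρ⁻¹)⁻¹ with hKc
  have hρinv : 0 ≤ ρ⁻¹ ∧ ρ⁻¹ < 1 := ⟨by positivity, by rw [inv_lt_one_iff₀]; right; exact hρ1⟩
  have hKc0 : 0 ≤ Kc := by
    rw [hKc]
    have h5 := hρinv.2
    have h6 : (0:ℝ) < 1 - ρ⁻¹ := by linarith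
    positivity
  set A : ℝ := ∑ i ∈ Finset.range (J+1), (u i : ℝ) with hA
  have hA0 : 0 ≤ A := Finset.sum_nonneg fun i _ => by positivity
  have hsumu : ∀ n : ℕ, ∑ i ∈ Finset.range (n+1), (u i : ℝ) ≤ A + Kc * u n := by
    intro n
    rcases le_or_gt (n+1) (J+1) with hn | hn
    · have h1 : ∑ i ∈ Finset.range (n+1), (u i : ℝ) ≤ A := by
        rw [hA]
        refine Finset.sum_le_sum_of_subset_of_nonneg (Finset.range_subset_range.2 hn)
          fun i _ _ => by positivity
      have h2 : (0:ℝ) ≤ Kc * u n := mul_nonneg hKc0 (by positivity)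
      linarith
    · have hJn : J ≤ n := by omega
      have hsplit : ∑ i ∈ Finset.range J, (u i : ℝ) + ∑ i ∈ Finset.Ico J (n+1), (u i : ℝ)
          = ∑ i ∈ Finset.range (n+1), (u i : ℝ) :=
        Finset.sum_range_add_sum_Ico _ (by omega)
      have h1 : ∑ i ∈ Finset.range J, (u i : ℝ) ≤ A := by
        rw [hA]
        refine Finset.sum_le_sum_of_subset_of_nonneg (Finset.range_subset_range.2 (by omega))
          fun i _ _ => by positivity
      have h2 : ∑ i ∈ Finset.Ico J (n+1), (u i : ℝ) ≤ Kc * u n := by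
        have hterm : ∀ i ∈ Finset.Ico J (n+1), (u i : ℝ) ≤ (ρ⁻¹) ^ (n - i) * u n := by
          intro i hi
          rw [Finset.mem_Ico] at hi
          have hkey2 : ρ ^ (n - i) * u i ≤ u (i + (n - i)) := hpowJ (n - i) i hi.1
          rw [show i + (n - i) = n by omega] at hkey2
          have hp : (0:ℝ) < ρ ^ (n - i) := pow_pos hρ0 _
          rw [inv_pow, ← div_eq_inv_mul]
          exact (le_div_iff₀ hp).mpr (by rw [mul_comm]; exact hkey2)
        calc ∑ i ∈ Finset.Ico J (n+1), (u i : ℝ)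
            ≤ ∑ i ∈ Finset.Ico J (n+1), (ρ⁻¹) ^ (n - i) * (u n : ℝ) :=
              Finset.sum_le_sum hterm
        _ ≤ ∑ i ∈ Finset.range (n+1), (ρ⁻¹) ^ (n - i) * (u n : ℝ) := by
              refine Finset.sum_le_sum_of_subset_of_nonneg ?_ fun i _ _ => by positivity
              intro i hi
              rw [Finset.mem_Ico] at hi
              rw [Finset.mem_range]
              omega
        _ = (∑ i ∈ Finset.range (n+1), (ρ⁻¹) ^ (n - i)) * (u n : ℝ) := by
              rw [Finset.sum_mul]
        _ ≤ Kc * u n := by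
              refine mul_le_mul_of_nonneg_right ?_ (by positivity)
              have hrefl : ∑ i ∈ Finset.range (n+1), (ρ⁻¹) ^ (n - i)
                  = ∑ k ∈ Finset.range (n+1), (ρ⁻¹) ^ k := by
                have := Finset.sum_range_reflect (fun k => (ρ⁻¹) ^ k) (n+1)
                simpa using this
              rw [hrefl, hKc]
              exact aux_geom_sum_le hρinv.1 hρinv.2 _
      linarith
  -- sum of the heights of the a i
  obtain ⟨I₂, hI₂⟩ : ∃ I, ∀ i, I ≤ i → h i ≤ (u i : ℝ) := by
    have hev := hht.def one_pos
    rw [eventually_atTop] at hev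
    obtain ⟨I, hI⟩ := hev
    refine ⟨I, fun i hi => ?_⟩
    have := hI i hi
    rw [Real.norm_eq_abs, Real.norm_eq_abs, abs_of_nonneg (hh0 i),
      abs_of_nonneg (by positivity : (0:ℝ) ≤ (u i : ℝ)), one_mul] at this
    exact this
  set A₂ : ℝ := ∑ i ∈ Finset.range I₂, h i with hA₂
  have hA₂0 : 0 ≤ A₂ := Finset.sum_nonneg fun i _ => hh0 i
  have hsh : ∀ n : ℕ, ∑ i ∈ Finset.range (n+1), h i
      ≤ A₂ + ∑ i ∈ Finset.range (n+1), (u i : ℝ) := by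
    intro n
    rw [← Finset.sum_filter_add_sum_filter_not (Finset.range (n+1)) (fun i => i < I₂) h]
    have h1 : ∑ i ∈ (Finset.range (n+1)).filter (fun i => i < I₂), h i ≤ A₂ := by
      rw [hA₂]
      refine Finset.sum_le_sum_of_subset_of_nonneg ?_ fun i _ _ => hh0 i
      intro i hi
      rw [Finset.mem_filter] at hi
      rw [Finset.mem_range]
      exact hi.2
    have h2 : ∑ i ∈ (Finset.range (n+1)).filter (fun i => ¬ i < I₂), h i
        ≤ ∑ i ∈ Finset.range (n+1), (u i : ℝ) := by
      calc ∑ i ∈ (Finset.range (n+1)).filter (fun i => ¬ i < I₂), h i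
          ≤ ∑ i ∈ (Finset.range (n+1)).filter (fun i => ¬ i < I₂), (u i : ℝ) := by
            refine Finset.sum_le_sum fun i hi => ?_
            rw [Finset.mem_filter] at hi
            exact hI₂ i (by omega)
      _ ≤ ∑ i ∈ Finset.range (n+1), (u i : ℝ) :=
            Finset.sum_le_sum_of_subset_of_nonneg (Finset.filter_subset _ _)
              fun i _ _ => by positivity
    linarith
  -- total log-height bound : log H(α n) ≤ CA + CB * u n
  set CA : ℝ := A₂ + A + Hβi * A + D.card with hCA
  set CB : ℝ := Kc + Hβi * Kc + D.card with hCB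
  have hCA0 : 0 ≤ CA := by
    have h5 := mul_nonneg hHβi0 hA0
    have h6 : (0:ℝ) ≤ D.card := Nat.cast_nonneg _
    rw [hCA]; linarith
  have hCB0 : 0 ≤ CB := by
    have h5 := mul_nonneg hHβi0 hKc0
    have h6 : (0:ℝ) ≤ D.card := Nat.cast_nonneg _
    rw [hCB]; linarith
  have hlogH : ∀ n : ℕ,
      Real.log (weilHeight absv (∑ i ∈ Finset.range (n+1), a i * β⁻¹ ^ u i))
        ≤ CA + CB * u n := by
    intro n
    have hb := hlogbound n
    have hsplit : ∑ i ∈ Finset.range (n+1), (h i + (u i : ℝ) * Hβi)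
        = ∑ i ∈ Finset.range (n+1), h i + (∑ i ∈ Finset.range (n+1), (u i : ℝ)) * Hβi := by
      rw [Finset.sum_add_distrib, Finset.sum_mul]
    have hlog2 : Real.log ((n:ℝ)+2) ≤ (u n : ℝ) + 1 := by
      have h1 : Real.log ((n:ℝ)+2) ≤ ((n:ℝ)+2) - 1 :=
        Real.log_le_sub_one_of_pos (by positivity)
      have h2 : (n:ℝ) ≤ (u n : ℝ) := by exact_mod_cast hu.le_apply
      linarith
    have hsum1 := hsumu n
    have hsum2 := hsh n
    have hd0 : (0:ℝ) ≤ D.card := by positivity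
    have hun0 : (0:ℝ) ≤ (u n : ℝ) := by positivity
    calc Real.log (weilHeight absv (∑ i ∈ Finset.range (n+1), a i * β⁻¹ ^ u i))
        ≤ (D.card : ℝ) * Real.log ((n:ℝ)+2) +
          ∑ i ∈ Finset.range (n+1), (h i + (u i : ℝ) * Hβi) := hb
    _ ≤ (D.card : ℝ) * ((u n : ℝ) + 1) +
          (∑ i ∈ Finset.range (n+1), h i + (∑ i ∈ Finset.range (n+1), (u i : ℝ)) * Hβi) := by
        rw [hsplit]
        have := mul_le_mul_of_nonneg_left hlog2 hd0
        linarith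
    _ ≤ (D.card : ℝ) * ((u n : ℝ) + 1) +
          ((A₂ + (A + Kc * u n)) + (A + Kc * u n) * Hβi) := by
        have h3 : ∑ i ∈ Finset.range (n+1), h i ≤ A₂ + (A + Kc * u n) := by linarith
        have h4 : (∑ i ∈ Finset.range (n+1), (u i : ℝ)) * Hβi ≤ (A + Kc * u n) * Hβi :=
          mul_le_mul_of_nonneg_right hsum1 hHβi0
        linarith
    _ ≤ CA + CB * u n := by
        rw [hCA, hCB]
        nlinarith
  -- final choice of n
  set Cc : ℝ := ((ω * CB + 1) * 2) / lam with hCc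
  obtain ⟨M₀, hM₀⟩ := exists_nat_gt (ω * CA + Real.log (1 - r)⁻¹)
  set N' : ℕ := max (max N I₀) M₀ with hN'
  obtain ⟨n, hnN', hngap⟩ := (frequently_atTop.1 (hlimsup Cc)) N'
  refine ⟨n, le_trans (le_trans (le_max_left _ _) (le_max_left _ _)) hnN', ?_⟩
  -- rewrite the partial sum through ι
  have hιsum : ι (∑ i ∈ Finset.range (n + 1), a i * β⁻¹ ^ u i)
      = ∑ i ∈ Finset.range (n+1), c i := by
    rw [map_sum]
    refine Finset.sum_congr rfl fun i _ => ?_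
    rw [hc]
    simp only [map_mul, map_pow, map_inv₀]
  have hI₀n : I₀ ≤ n + 1 := by
    have : I₀ ≤ N' := le_trans (le_max_right _ _) (le_max_left _ _)
    omega
  have htail' := htail n hI₀n
  -- numeric comparison
  set L := Real.log (weilHeight absv (∑ i ∈ Finset.range (n+1), a i * β⁻¹ ^ u i)) with hL
  have hL0 : 0 ≤ L := Real.log_nonneg (aux_one_le_weilHeight absv _)
  have hLle : L ≤ CA + CB * u n := hlogH n
  have hunN : (N' : ℝ) ≤ (u n : ℝ) := by
    have h1 : N' ≤ n := hnN'
    have h2 : n ≤ u n := hu.le_apply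
    exact_mod_cast le_trans h1 h2
  have hM₀N' : (M₀ : ℝ) ≤ (N' : ℝ) := by
    exact_mod_cast le_max_right (max N I₀) M₀
  clear_value L CA CB Cc Kc A A₂ Hβi
  have hcore : Real.log (1 - r)⁻¹ + ω * L ≤ lam / 2 * (u (n+1) : ℝ) := by
    have h1 : ω * L ≤ ω * (CA + CB * u n) := mul_le_mul_of_nonneg_left hLle hω.le
    have h2 : lam / 2 * (u (n+1) : ℝ) ≥ lam / 2 * (Cc * u n) := by
      have := hngap.le
      have hlam2 : (0:ℝ) ≤ lam / 2 := by positivity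
      nlinarith
    have h3 : lam / 2 * (Cc * u n) = (ω * CB + 1) * u n := by
      rw [hCc]
      field_simp
    have h4 : ω * CA + Real.log (1 - r)⁻¹ ≤ (u n : ℝ) := by
      calc ω * CA + Real.log (1 - r)⁻¹ ≤ (M₀ : ℝ) := hM₀.le
      _ ≤ (N' : ℝ) := hM₀N'
      _ ≤ (u n : ℝ) := hunN
    have hun0 : (0:ℝ) ≤ (u n : ℝ) := by positivity
    have h5 : ω * (CA + CB * (u n:ℝ)) = ω * CA + ω * CB * (u n:ℝ) := by ring
    calc Real.log (1 - r)⁻¹ + ω * L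
        ≤ Real.log (1 - r)⁻¹ + (ω * CA + ω * CB * (u n:ℝ)) := by linarith [h1, h5]
    _ ≤ (u n:ℝ) + ω * CB * (u n:ℝ) := by linarith [h4]
    _ = (ω * CB + 1) * (u n:ℝ) := by ring
    _ = lam / 2 * (Cc * (u n:ℝ)) := h3.symm
    _ ≤ lam / 2 * (u (n+1):ℝ) := h2
  -- conclude
  have hfinal : ‖(∑' i : ℕ, c i) - ∑ i ∈ Finset.range (n+1), c i‖ ≤
      weilHeight absv (∑ i ∈ Finset.range (n+1), a i * β⁻¹ ^ u i) ^ (-ω) := by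
    calc ‖(∑' i : ℕ, c i) - ∑ i ∈ Finset.range (n+1), c i‖
      ≤ (1 - r)⁻¹ * r ^ u (n+1) := htail'
    _ = Real.exp (Real.log (1 - r)⁻¹ + (u (n+1) : ℝ) * (-(lam/2))) := by
        rw [Real.exp_add, Real.exp_log (inv_pos.mpr (by linarith : (0:ℝ) < 1 - r))]
        congr 1
        rw [hrdef, ← Real.exp_nat_mul]
    _ ≤ Real.exp (-(ω * L)) := by
        rw [Real.exp_le_exp]
        nlinarith [hcore]
    _ = weilHeight absv (∑ i ∈ Finset.range (n+1), a i * β⁻¹ ^ u i) ^ (-ω) := by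
        rw [Real.rpow_def_of_pos (hHpos _), ← hL]
        congr 1
        ring
  rw [← hιsum] at hfinal
  exact hfinal
end
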